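/- arXiv:2310.17442 — 4 statements merged into one kernel-verified Lean document; each statement's English description precedes it below -/
import Mathlib

section
/- Let X be a finitely ramified fractal and let d be an undistorted metric on X. Then there exists a constant α ≥ 1 such that for every pair (x,y) of distinct points of X and every covering pair (E_x, E_y) for (x,y), one has diam(E_x)/α ≤ d(x,y) ≤ α·diam(E_x). -/
open Set

/-- A finitely ramified cell structure on a topological space `X`: a locally finite,
level-indexed family of "cells", where each cell is compact, connected, with nonempty
interior, the unique `0`-cell is all of `X`, every `(n+1)`-cell lies in some `n`-cell,
each `n`-cell is the union of the `(n+1)`-cells it contains, two distinct cells of the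
same level meet in a finite set, and every infinite descending chain of cells
intersects in a single point. -/
structure CellStructure (X : Type*) [TopologicalSpace X] where
  cells : ℕ → Set (Set X)
  finite_cells : ∀ n, (cells n).Finite
  isCompact_cells : ∀ n, ∀ E ∈ cells n, IsCompact E
  isConnected_cells : ∀ n, ∀ E ∈ cells n, IsConnected E
  interior_nonempty : ∀ n, ∀ E ∈ cells n, (interior E).Nonempty
  root : cells 0 = {Set.univ}
  exists_parent : ∀ n, ∀ E' ∈ cells (n + 1), ∃ E ∈ cells n, E' ⊆ E
  eq_sUnion_children : ∀ n, ∀ E ∈ cells n, E = ⋃₀ {E' | E' ∈ cells (n + 1) ∧ E' ⊆ E}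
  inter_finite : ∀ n, ∀ E₁ ∈ cells n, ∀ E₂ ∈ cells n, E₁ ≠ E₂ → (E₁ ∩ E₂).Finite
  descending_singleton : ∀ E : ℕ → Set X, (∀ n, E n ∈ cells n) → (∀ n, E (n + 1) ⊆ E n) →
    ∃ p : X, (⋂ n, E n) = {p}

/-- `d` is a metric (distance function) on the set `X`. -/
def IsMetricOn {X : Type*} (d : X → X → ℝ) : Prop :=
  (∀ x y, 0 ≤ d x y) ∧ (∀ x y, d x y = 0 ↔ x = y) ∧ (∀ x y, d x y = d y x) ∧
    ∀ x y z, d x z ≤ d x y + d y z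

/-- The distance function `d` induces the given topology on `X`. -/
def InducesTopology {X : Type*} [TopologicalSpace X] (d : X → X → ℝ) : Prop :=
  ∀ s : Set X, IsOpen s ↔ ∀ x ∈ s, ∃ ε > 0, ∀ y, d x y < ε → y ∈ s

/-- The diameter of a set with respect to a distance function. -/
noncomputable def sdiam {X : Type*} (d : X → X → ℝ) (S : Set X) : ℝ :=
  sSup (Set.image2 d S S)

/-- The distance between two sets with respect to a distance function. -/
noncomputable def sdist {X : Type*} (d : X → X → ℝ) (S T : Set X) : ℝ :=
  sInf (Set.image2 d S T)

/-- The distance function `d` is `(r,R,C,δ)`-undistorted with respect to the family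
of cells `cells`: exponential decay of diameter ratios of intersecting cells, and
cell separation for disjoint cells of the same level. -/
def IsUndistortedWith {X : Type*} (cells : ℕ → Set (Set X)) (d : X → X → ℝ)
    (r R C δ : ℝ) : Prop :=
  0 < r ∧ r ≤ R ∧ R < 1 ∧ 1 ≤ C ∧ 0 < δ ∧
    (∀ m n : ℕ, m ≤ n → ∀ E ∈ cells m, ∀ E' ∈ cells n, (E ∩ E').Nonempty →
      r ^ (n - m) / C ≤ sdiam d E' / sdiam d E ∧
        sdiam d E' / sdiam d E ≤ C * R ^ (n - m)) ∧
    ∀ n : ℕ, ∀ E₁ ∈ cells n, ∀ E₂ ∈ cells n, Disjoint E₁ E₂ →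
      δ * sdiam d E₁ ≤ sdist d E₁ E₂

/-- `d` is undistorted if it is `(r,R,C,δ)`-undistorted for some constants. -/
def IsUndistorted {X : Type*} (cells : ℕ → Set (Set X)) (d : X → X → ℝ) : Prop :=
  ∃ r R C δ : ℝ, IsUndistortedWith cells d r R C δ

/-- `η` is a homeomorphism of `[0,∞)` onto itself (equivalently: a continuous,
strictly increasing surjection of `[0,∞)` onto `[0,∞)` fixing `0`). -/
def IsQSGauge (η : ℝ → ℝ) : Prop :=
  ContinuousOn η (Set.Ici 0) ∧ StrictMonoOn η (Set.Ici 0) ∧ η 0 = 0 ∧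
    Set.MapsTo η (Set.Ici 0) (Set.Ici 0) ∧ Set.SurjOn η (Set.Ici 0) (Set.Ici 0)

/-- The `η`-quasisymmetry inequality for a map `f` between sets carrying
distance functions `dX` and `dY`. -/
def QSIneq {X Y : Type*} (dX : X → X → ℝ) (dY : Y → Y → ℝ) (f : X → Y) (η : ℝ → ℝ) : Prop :=
  ∀ a b c : X, a ≠ b → a ≠ c → b ≠ c →
    dY (f a) (f b) / dY (f a) (f c) ≤ η (dX a b / dX a c)


/-- `(Ex, Ey)` is a covering pair for the pair of distinct points `(x, y)`:
an intersecting pair of `n`-cells with `x ∈ Ex`, `y ∈ Ey`, where `n` is maximal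
among levels admitting such a pair. -/
def IsCoveringPair {X : Type*} [TopologicalSpace X] (CS : CellStructure X) (x y : X)
    (n : ℕ) (Ex Ey : Set X) : Prop :=
  Ex ∈ CS.cells n ∧ Ey ∈ CS.cells n ∧ x ∈ Ex ∧ y ∈ Ey ∧ (Ex ∩ Ey).Nonempty ∧
    ∀ m : ℕ, n < m → ∀ Fx ∈ CS.cells m, ∀ Fy ∈ CS.cells m,
      x ∈ Fx → y ∈ Fy → ¬(Fx ∩ Fy).Nonempty

/-- On a compact space, a metric inducing the topology is bounded. -/
lemma exists_bound_aux {X : Type*} [TopologicalSpace X] [CompactSpace X]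
    (d : X → X → ℝ) (hmet : IsMetricOn d) (htop : InducesTopology d) :
    ∃ M : ℝ, ∀ a b : X, d a b ≤ M := by
  obtain ⟨hnn, heq0, hsymm, htri⟩ := hmet
  rcases isEmpty_or_nonempty X with h | h
  · exact ⟨0, fun a => (IsEmpty.false a).elim⟩
  obtain ⟨x0⟩ := h
  have hball : ∀ (x : X) (ε : ℝ), IsOpen {y | d x y < ε} := by
    intro x ε
    rw [htop]
    intro z hz
    refine ⟨ε - d x z, by simpa using hz, fun y hy => ?_⟩
    have h1 := htri x z y
    simp only [Set.mem_setOf_eq]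
    linarith
  have hcont : Continuous (fun y => d x0 y) := by
    rw [continuous_iff_continuousAt]
    intro x
    rw [ContinuousAt, Metric.tendsto_nhds]
    intro ε hε
    have hx0 : x ∈ {y | d x y < ε} := by
      simp only [Set.mem_setOf_eq]
      have : d x x = 0 := (heq0 x x).mpr rfl
      linarith
    have hmem : {y | d x y < ε} ∈ nhds x := (hball x ε).mem_nhds hx0
    filter_upwards [hmem] with y hy
    rw [Real.dist_eq, abs_lt]
    have h1 := htri x0 x y
    have h2 := htri x0 y x
    have h3 := hsymm x y
    constructor <;> linarith
  obtain ⟨xm, -, hxm⟩ := isCompact_univ.exists_isMaxOn ⟨x0, trivial⟩ hcont.continuousOn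
  refine ⟨2 * d x0 xm, fun a b => ?_⟩
  have h1 := htri a x0 b
  have h2 : d x0 a ≤ d x0 xm := hxm (Set.mem_univ a)
  have h3 : d x0 b ≤ d x0 xm := hxm (Set.mem_univ b)
  have h4 := hsymm a x0
  linarith

lemma le_sdiam_aux {X : Type*} (d : X → X → ℝ) (M : ℝ) (hM : ∀ a b : X, d a b ≤ M)
    {S : Set X} {a b : X} (ha : a ∈ S) (hb : b ∈ S) : d a b ≤ sdiam d S := by
  refine le_csSup ⟨M, fun z hz => ?_⟩ (Set.mem_image2_of_mem ha hb)
  obtain ⟨u, -, v, -, rfl⟩ := hz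
  exact hM u v

lemma sdist_le_aux {X : Type*} (d : X → X → ℝ) (hnn : ∀ a b : X, 0 ≤ d a b)
    {S T : Set X} {a b : X} (ha : a ∈ S) (hb : b ∈ T) : sdist d S T ≤ d a b := by
  refine csInf_le ⟨0, fun z hz => ?_⟩ (Set.mem_image2_of_mem ha hb)
  obtain ⟨u, -, v, -, rfl⟩ := hz
  exact hnn u v

lemma sdiam_nonneg_aux {X : Type*} (d : X → X → ℝ) (hnn : ∀ a b : X, 0 ≤ d a b)
    (S : Set X) : 0 ≤ sdiam d S := by
  refine Real.sSup_nonneg (fun z hz => ?_)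
  obtain ⟨u, -, v, -, rfl⟩ := hz
  exact hnn u v

/-- If `d` is an undistorted metric on a finitely ramified fractal `X`,
then there is `α ≥ 1` with `diam(E_x)/α ≤ d(x,y) ≤ α diam(E_x)` for every pair of
distinct points and every covering pair for it. -/
theorem stmt1 {X : Type*} [TopologicalSpace X] [CompactSpace X] [ConnectedSpace X]
    [TopologicalSpace.MetrizableSpace X] (CS : CellStructure X) (d : X → X → ℝ)
    (hmet : IsMetricOn d) (htop : InducesTopology d)
    (hund : IsUndistorted CS.cells d) :
    ∃ α : ℝ, 1 ≤ α ∧ ∀ x y : X, x ≠ y → ∀ (n : ℕ) (Ex Ey : Set X),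
      IsCoveringPair CS x y n Ex Ey →
        sdiam d Ex / α ≤ d x y ∧ d x y ≤ α * sdiam d Ex := by
  obtain ⟨r, R, C, δ, hr, hrR, hR1, hC, hδ, hdecay, hsep⟩ := hund
  obtain ⟨M, hM⟩ := exists_bound_aux d hmet htop
  obtain ⟨hnn, heq0, hsymm, htri⟩ := hmet
  have hC0 : (0:ℝ) < C := lt_of_lt_of_le one_pos hC
  have hδr : 0 < δ * r := mul_pos hδ hr
  set α := max (1 + C) (C / (δ * r)) with hαdef
  have hα1 : (1:ℝ) ≤ α := le_trans (by linarith) (le_max_left _ _)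
  have hαpos : (0:ℝ) < α := lt_of_lt_of_le one_pos hα1
  refine ⟨α, hα1, ?_⟩
  rintro x y hxy n Ex Ey ⟨hEx, hEy, hx, hy, ⟨z, hzx, hzy⟩, hmax⟩
  -- positivity of diam Ex
  have hEx0 : 0 ≤ sdiam d Ex := sdiam_nonneg_aux d hnn Ex
  have hExpos : 0 < sdiam d Ex := by
    rcases hEx0.lt_or_eq with h | h
    · exact h
    exfalso
    obtain ⟨hlo, -⟩ := hdecay n n le_rfl Ex hEx Ex hEx ⟨x, hx, hx⟩
    rw [← h] at hlo
    simp only [Nat.sub_self, pow_zero, div_zero] at hlo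
    have : (0:ℝ) < 1 / C := div_pos one_pos hC0
    linarith
  constructor
  · -- lower bound
    obtain ⟨Fx, ⟨hFx, hFxsub⟩, hxFx⟩ := by
      have h := CS.eq_sUnion_children n Ex hEx
      rw [h] at hx
      exact hx
    obtain ⟨Fy, ⟨hFy, hFysub⟩, hyFy⟩ := by
      have h := CS.eq_sUnion_children n Ey hEy
      rw [h] at hy
      exact hy
    have hdisj : Disjoint Fx Fy := by
      rw [Set.disjoint_iff_inter_eq_empty, ← Set.not_nonempty_iff_eq_empty]
      exact hmax (n+1) (Nat.lt_succ_self n) Fx hFx Fy hFy hxFx hyFy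
    have hsep' := hsep (n+1) Fx hFx Fy hFy hdisj
    have hdistle : sdist d Fx Fy ≤ d x y := sdist_le_aux d hnn hxFx hyFy
    obtain ⟨hlo, -⟩ := hdecay n (n+1) (Nat.le_succ n) Ex hEx Fx hFx ⟨x, hx, hxFx⟩
    have hsub : n + 1 - n = 1 := by omega
    rw [hsub, pow_one] at hlo
    have h1 : r * sdiam d Ex ≤ sdiam d Fx * C := (div_le_div_iff₀ hC0 hExpos).mp hlo
    have key : δ * r * sdiam d Ex ≤ C * d x y := by
      have h2 := mul_le_mul_of_nonneg_left h1 hδ.le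
      have h3 := mul_le_mul_of_nonneg_left (hsep'.trans hdistle) hC0.le
      nlinarith
    rw [div_le_iff₀ hαpos]
    have hαge : C / (δ * r) ≤ α := le_max_right _ _
    have hCval : C / (δ * r) * (δ * r) = C := div_mul_cancel₀ _ hδr.ne'
    have hxy0 : 0 ≤ d x y := hnn x y
    have h5 : C / (δ * r) * (δ * r) * d x y ≤ α * (δ * r) * d x y := by
      have := mul_le_mul_of_nonneg_right (mul_le_mul_of_nonneg_right hαge hδr.le) hxy0
      linarith
    rw [hCval] at h5
    nlinarith
  · -- upper bound
    obtain ⟨-, hhi⟩ := hdecay n n le_rfl Ex hEx Ey hEy ⟨z, hzx, hzy⟩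
    simp only [Nat.sub_self, pow_zero, mul_one] at hhi
    have hEyle : sdiam d Ey ≤ C * sdiam d Ex := by
      rw [div_le_iff₀ hExpos] at hhi
      linarith [hhi]
    have h1 : d x z ≤ sdiam d Ex := le_sdiam_aux d M hM hx hzx
    have h2 : d z y ≤ sdiam d Ey := le_sdiam_aux d M hM hzy hy
    have h3 := htri x z y
    have h4 : (1 + C) * sdiam d Ex ≤ α * sdiam d Ex :=
      mul_le_mul_of_nonneg_right (le_max_left _ _) hEx0
    linarith
end

section
/- Let X be a finitely ramified fractal and let d and d' be two undistorted metrics on X. Then d and d' are quasisymmetrically equivalent: there exists a homeomorphism η : [0,∞) → [0,∞) such that the identity map (X,d) → (X,d') is an η-quasisymmetry. -/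
/-!
Whether two points `x ≠ y` lie in intersecting `n`-cells is a purely combinatorial
condition; let `m` be the last level at which it holds. For any undistorted metric, the
cell-separation property bounds `d x y` below by a multiple of the diameter of an
`(m+1)`-cell `F` containing `x`, and exponential decay bounds it above by a multiple of the
same diameter. So for a triple `a, b, c` both ratios `d a b / d a c` and `d' a b / d' a c`
are comparable to ratios of diameters of two cells `F₁, F₂` containing `a`, at levels
differing by some `k`. Exponential decay makes the `d`-ratio at least a multiple of `r ^ k`
(or of `R ^ k` when `k < 0`) and the `d'`-ratio at most a multiple of `R' ^ k` (or `r' ^ k`),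
which gives `η t = A t ^ α + B t ^ β` with `α = log R' / log r` and `β = log r' / log R`.
-/

open Set

namespace CellStructure

variable {X : Type*} [TopologicalSpace X] (CS : CellStructure X)

theorem univ_mem_cells_zero : univ ∈ CS.cells 0 := by
  rw [CS.root]; exact mem_singleton _

theorem exists_mem_cells (n : ℕ) (x : X) : ∃ E ∈ CS.cells n, x ∈ E := by
  induction n with
  | zero => exact ⟨univ, CS.univ_mem_cells_zero, mem_univ x⟩
  | succ n ih =>
    obtain ⟨E, hE, hx⟩ := ih
    rw [CS.eq_sUnion_children n E hE] at hx
    obtain ⟨E', ⟨hE', -⟩, hx'⟩ := hx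
    exact ⟨E', hE', hx'⟩

def AdjacentAt (n : ℕ) (x y : X) : Prop :=
  ∃ E₁ ∈ CS.cells n, ∃ E₂ ∈ CS.cells n, x ∈ E₁ ∧ y ∈ E₂ ∧ (E₁ ∩ E₂).Nonempty

def IsSeparationLevel (m : ℕ) (x y : X) : Prop :=
  CS.AdjacentAt m x y ∧ ¬ CS.AdjacentAt (m + 1) x y

theorem adjacentAt_zero (x y : X) : CS.AdjacentAt 0 x y :=
  ⟨univ, CS.univ_mem_cells_zero, univ, CS.univ_mem_cells_zero, mem_univ x, mem_univ y,
    ⟨x, mem_univ x, mem_univ x⟩⟩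

theorem exists_isSeparationLevel_of_not_adjacentAt {N : ℕ} {x y : X}
    (h : ¬ CS.AdjacentAt N x y) : ∃ m, CS.IsSeparationLevel m x y := by
  induction N with
  | zero => exact absurd (CS.adjacentAt_zero x y) h
  | succ N ih =>
    by_cases hN : CS.AdjacentAt N x y
    · exact ⟨N, hN, h⟩
    · exact ih hN

end CellStructure

theorem sdist_le_of_mem {X : Type*} {d : X → X → ℝ} (h0 : ∀ x y, 0 ≤ d x y) {S T : Set X}
    {x y : X} (hx : x ∈ S) (hy : y ∈ T) : sdist d S T ≤ d x y :=
  csInf_le ⟨0, by rintro _ ⟨u, -, v, -, rfl⟩; exact h0 u v⟩ (mem_image2_of_mem hx hy)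

namespace IsUndistortedWith

variable {X : Type*} [TopologicalSpace X] {CS : CellStructure X} {d : X → X → ℝ}
  {r R C δ : ℝ} (hu : IsUndistortedWith CS.cells d r R C δ)
include hu

theorem r_pos : 0 < r := hu.1

theorem R_pos : 0 < R := hu.1.trans_le hu.2.1

theorem R_lt_one : R < 1 := hu.2.2.1

theorem r_lt_one : r < 1 := hu.2.1.trans_lt hu.2.2.1

theorem C_pos : 0 < C := one_pos.trans_le hu.2.2.2.1

theorem δ_pos : 0 < δ := hu.2.2.2.2.1

theorem decay {m n : ℕ} (hmn : m ≤ n) {E E' : Set X} (hE : E ∈ CS.cells m)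
    (hE' : E' ∈ CS.cells n) (h : (E ∩ E').Nonempty) :
    r ^ (n - m) / C ≤ sdiam d E' / sdiam d E ∧ sdiam d E' / sdiam d E ≤ C * R ^ (n - m) :=
  hu.2.2.2.2.2.1 m n hmn E hE E' hE' h

theorem separation {n : ℕ} {E₁ E₂ : Set X} (hE₁ : E₁ ∈ CS.cells n) (hE₂ : E₂ ∈ CS.cells n)
    (h : Disjoint E₁ E₂) : δ * sdiam d E₁ ≤ sdist d E₁ E₂ :=
  hu.2.2.2.2.2.2 n E₁ hE₁ E₂ hE₂ h

variable (hmet : IsMetricOn d)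
include hmet

theorem sdiam_pos {n : ℕ} {E : Set X} (hE : E ∈ CS.cells n) {x : X} (hx : x ∈ E) :
    0 < sdiam d E := by
  have hne : sdiam d E ≠ 0 := by
    intro h0
    have h := (hu.decay le_rfl hE hE ⟨x, hx, hx⟩).1
    rw [h0, div_zero, Nat.sub_self, pow_zero, one_div, inv_nonpos] at h
    exact absurd h (not_le.2 hu.C_pos)
  refine lt_of_le_of_ne (Real.sSup_nonneg ?_) hne.symm
  rintro _ ⟨u, -, v, -, rfl⟩
  exact hmet.1 u v

/-- Since `sSup` of a set unbounded above is `0`, the positivity of `sdiam d E` forces the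
distances within the cell `E` to be bounded. -/
theorem le_sdiam {n : ℕ} {E : Set X} (hE : E ∈ CS.cells n) {x y : X} (hx : x ∈ E)
    (hy : y ∈ E) : d x y ≤ sdiam d E := by
  have hbdd : BddAbove (image2 d E E) := by
    by_contra h
    exact (hu.sdiam_pos hmet hE hx).ne' (Real.sSup_of_not_bddAbove h)
  exact le_csSup hbdd (mem_image2_of_mem hx hy)

theorem sdiam_div_sdiam_bounds_of_lt {p q : ℕ} (hpq : p < q) {P Q : Set X}
    (hP : P ∈ CS.cells p) (hQ : Q ∈ CS.cells q) {a : X} (haP : a ∈ P) (haQ : a ∈ Q) :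
    R⁻¹ ^ (q - p) / C ≤ sdiam d P / sdiam d Q ∧ sdiam d P / sdiam d Q ≤ C * r⁻¹ ^ (q - p) := by
  obtain ⟨hlow, hup⟩ := hu.decay hpq.le hP hQ ⟨a, haP, haQ⟩
  have hρ : 0 < sdiam d Q / sdiam d P :=
    div_pos (hu.sdiam_pos hmet hQ haQ) (hu.sdiam_pos hmet hP haP)
  rw [← inv_div (sdiam d Q)]
  have hr := hu.r_pos
  have hC := hu.C_pos
  constructor
  · calc R⁻¹ ^ (q - p) / C = (C * R ^ (q - p))⁻¹ := by
          rw [inv_pow, mul_inv, div_eq_mul_inv, mul_comm]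
      _ ≤ (sdiam d Q / sdiam d P)⁻¹ := inv_anti₀ hρ hup
  · calc (sdiam d Q / sdiam d P)⁻¹ ≤ (r ^ (q - p) / C)⁻¹ := inv_anti₀ (by positivity) hlow
      _ = C * r⁻¹ ^ (q - p) := by rw [inv_div, inv_pow, div_eq_mul_inv]

theorem le_dist_of_not_adjacentAt {n : ℕ} {x y : X} (h : ¬ CS.AdjacentAt n x y) {E : Set X}
    (hE : E ∈ CS.cells n) (hx : x ∈ E) : δ * sdiam d E ≤ d x y := by
  obtain ⟨F, hF, hy⟩ := CS.exists_mem_cells n y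
  have hdisj : Disjoint E F :=
    not_not.1 fun hEF => h ⟨E, hE, F, hF, hx, hy, not_disjoint_iff_nonempty_inter.1 hEF⟩
  exact (hu.separation hE hF hdisj).trans (sdist_le_of_mem hmet.1 hx hy)

theorem dist_le_of_adjacentAt {n : ℕ} {x y : X} (h : CS.AdjacentAt n x y) :
    ∃ E ∈ CS.cells n, x ∈ E ∧ d x y ≤ (1 + C) * sdiam d E := by
  obtain ⟨E₁, hE₁, E₂, hE₂, hx, hy, z, hz₁, hz₂⟩ := h
  refine ⟨E₁, hE₁, hx, ?_⟩
  have hE₂E₁ : sdiam d E₂ ≤ C * sdiam d E₁ := by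
    have h := (hu.decay le_rfl hE₁ hE₂ ⟨z, hz₁, hz₂⟩).2
    rwa [Nat.sub_self, pow_zero, mul_one, div_le_iff₀ (hu.sdiam_pos hmet hE₁ hx)] at h
  calc d x y ≤ d x z + d z y := hmet.2.2.2 x z y
    _ ≤ sdiam d E₁ + sdiam d E₂ :=
      add_le_add (hu.le_sdiam hmet hE₁ hx hz₁) (hu.le_sdiam hmet hE₂ hz₂ hy)
    _ ≤ (1 + C) * sdiam d E₁ := by linarith

theorem exists_isSeparationLevel {x y : X} (hxy : x ≠ y) : ∃ m, CS.IsSeparationLevel m x y := by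
  have hdxy : 0 < d x y := lt_of_le_of_ne (hmet.1 x y) fun h => hxy ((hmet.2.1 x y).1 h.symm)
  have hD := hu.sdiam_pos hmet CS.univ_mem_cells_zero (mem_univ x)
  have hC := hu.C_pos
  obtain ⟨N, hN⟩ := exists_pow_lt_of_lt_one
    (show 0 < d x y / ((1 + C) * (C * sdiam d univ)) by positivity) hu.R_lt_one
  refine CS.exists_isSeparationLevel_of_not_adjacentAt (N := N) fun hadj => ?_
  obtain ⟨E, hE, hxE, hdE⟩ := hu.dist_le_of_adjacentAt hmet hadj
  have hEuniv : sdiam d E ≤ C * R ^ N * sdiam d univ := by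
    have h := (hu.decay (Nat.zero_le N) CS.univ_mem_cells_zero hE ⟨x, mem_univ x, hxE⟩).2
    rwa [Nat.sub_zero, div_le_iff₀ hD] at h
  rw [lt_div_iff₀ (by positivity)] at hN
  have := calc d x y ≤ (1 + C) * sdiam d E := hdE
    _ ≤ (1 + C) * (C * R ^ N * sdiam d univ) := by gcongr
    _ = R ^ N * ((1 + C) * (C * sdiam d univ)) := by ring
    _ < d x y := hN
  exact lt_irrefl _ this

theorem dist_bounds_of_isSeparationLevel {m : ℕ} {x y : X} (h : CS.IsSeparationLevel m x y)
    {F : Set X} (hF : F ∈ CS.cells (m + 1)) (hx : x ∈ F) :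
    δ * sdiam d F ≤ d x y ∧ d x y ≤ (1 + C) * C / r * sdiam d F := by
  refine ⟨hu.le_dist_of_not_adjacentAt hmet h.2 hF hx, ?_⟩
  obtain ⟨E, hE, hxE, hdE⟩ := hu.dist_le_of_adjacentAt hmet h.1
  have hEF : sdiam d E ≤ C / r * sdiam d F := by
    have h := (hu.decay (Nat.le_add_right m 1) hE hF ⟨x, hxE, hx⟩).1
    rw [Nat.add_sub_cancel_left, pow_one, div_le_div_iff₀ hu.C_pos (hu.sdiam_pos hmet hE hxE)] at h
    rw [div_mul_eq_mul_div, le_div_iff₀ hu.r_pos]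
    linarith
  calc d x y ≤ (1 + C) * sdiam d E := hdE
    _ ≤ (1 + C) * (C / r * sdiam d F) := by gcongr; linarith [hu.C_pos]
    _ = (1 + C) * C / r * sdiam d F := by ring

theorem dist_div_dist_bounds {m₁ m₂ : ℕ} {a b c : X} (h₁ : CS.IsSeparationLevel m₁ a b)
    (h₂ : CS.IsSeparationLevel m₂ a c) {F₁ F₂ : Set X} (hF₁ : F₁ ∈ CS.cells (m₁ + 1))
    (haF₁ : a ∈ F₁) (hF₂ : F₂ ∈ CS.cells (m₂ + 1)) (haF₂ : a ∈ F₂) :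
    δ / ((1 + C) * C / r) * (sdiam d F₁ / sdiam d F₂) ≤ d a b / d a c ∧
      d a b / d a c ≤ (1 + C) * C / r / δ * (sdiam d F₁ / sdiam d F₂) := by
  obtain ⟨hab, hab'⟩ := hu.dist_bounds_of_isSeparationLevel hmet h₁ hF₁ haF₁
  obtain ⟨hac, hac'⟩ := hu.dist_bounds_of_isSeparationLevel hmet h₂ hF₂ haF₂
  have hF₁pos := hu.sdiam_pos hmet hF₁ haF₁
  have hF₂pos := hu.sdiam_pos hmet hF₂ haF₂
  have hr := hu.r_pos
  have hC := hu.C_pos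
  have hδ := hu.δ_pos
  rw [← mul_div_mul_comm, ← mul_div_mul_comm]
  have hac_pos : 0 < d a c := (by positivity : 0 < δ * sdiam d F₂).trans_le hac
  exact ⟨div_le_div₀ (hmet.1 a b) hab hac_pos hac',
    div_le_div₀ (by positivity) hab' (by positivity) hac⟩

end IsUndistortedWith

theorem le_mul_rpow_logb_of_le_pow {x y K M t u : ℝ} {k : ℕ} (hx : 0 < x) (hx1 : x ≠ 1)
    (hy : 0 < y) (hlog : 0 ≤ Real.logb x y) (hK : 0 < K) (hM : 0 ≤ M) (ht : K * x ^ k ≤ t)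
    (hu : u ≤ M * y ^ k) : u ≤ M / K ^ Real.logb x y * t ^ Real.logb x y := by
  have ht0 : 0 ≤ t := (by positivity : 0 ≤ K * x ^ k).trans ht
  have hxk : x ^ k ≤ t / K := (le_div_iff₀' hK).2 ht
  calc u ≤ M * y ^ k := hu
    _ = M * (x ^ k) ^ Real.logb x y := by
      rw [← Real.rpow_pow_comm hx.le, Real.rpow_logb hx hx1 hy]
    _ ≤ M * (t / K) ^ Real.logb x y := by gcongr
    _ = M / K ^ Real.logb x y * t ^ Real.logb x y := by
      rw [Real.div_rpow ht0 hK.le]; ring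

theorem isQSGauge_add_rpow {a b α β : ℝ} (ha : 0 < a) (hb : 0 < b) (hα : 0 < α) (hβ : 0 < β) :
    IsQSGauge (fun t => a * t ^ α + b * t ^ β) := by
  have hcont : ContinuousOn (fun t : ℝ => a * t ^ α + b * t ^ β) (Ici 0) :=
    fun x _ => ((continuousAt_const.mul (Real.continuousAt_rpow_const x α (Or.inr hα.le))).add
      (continuousAt_const.mul (Real.continuousAt_rpow_const x β (Or.inr hβ.le)))).continuousWithinAt
  have h0 : a * (0 : ℝ) ^ α + b * (0 : ℝ) ^ β = 0 := by
    rw [Real.zero_rpow hα.ne', Real.zero_rpow hβ.ne']; ring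
  refine ⟨hcont, ?_, h0, fun x (hx : 0 ≤ x) => (by positivity : 0 ≤ a * x ^ α + b * x ^ β),
    fun y hy => ?_⟩
  · intro x hx y _ hxy
    exact add_lt_add (mul_lt_mul_of_pos_left (Real.rpow_lt_rpow hx hxy hα) ha)
      (mul_lt_mul_of_pos_left (Real.rpow_lt_rpow hx hxy hβ) hb)
  · have hy : 0 ≤ y := hy
    set T := (y / a) ^ α⁻¹
    have hT : 0 ≤ T := by positivity
    have haT : a * T ^ α = y := by
      rw [← Real.rpow_mul (by positivity), inv_mul_cancel₀ hα.ne', Real.rpow_one,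
        mul_div_cancel₀ _ ha.ne']
    have hmem : y ∈ Icc (a * (0 : ℝ) ^ α + b * (0 : ℝ) ^ β) (a * T ^ α + b * T ^ β) :=
      ⟨by rw [h0]; exact hy, by rw [haT]; exact le_add_of_nonneg_right (by positivity)⟩
    obtain ⟨x, hx, hfx⟩ := intermediate_value_Icc hT (hcont.mono Icc_subset_Ici_self) hmem
    exact ⟨x, hx.1, hfx⟩

theorem exists_isQSGauge_of_sdiam_div_sdiam {X : Type*} [TopologicalSpace X]
    {CS : CellStructure X} {d d' : X → X → ℝ} {r R C δ r' R' C' δ' : ℝ}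
    (hu : IsUndistortedWith CS.cells d r R C δ) (hu' : IsUndistortedWith CS.cells d' r' R' C' δ')
    (hmet : IsMetricOn d) (hmet' : IsMetricOn d') {K M : ℝ} (hK : 0 < K) (hM : 0 < M) :
    ∃ η : ℝ → ℝ, IsQSGauge η ∧ ∀ {p q : ℕ} {P Q : Set X} {a : X}, P ∈ CS.cells p →
      Q ∈ CS.cells q → a ∈ P → a ∈ Q → ∀ {t u : ℝ}, K * (sdiam d P / sdiam d Q) ≤ t →
        u ≤ M * (sdiam d' P / sdiam d' Q) → u ≤ η t := by
  have hC := hu.C_pos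
  have hC' := hu'.C_pos
  set α := Real.logb r R'
  set β := Real.logb R⁻¹ r'⁻¹
  have hα : 0 < α := Real.logb_pos_of_base_lt_one hu.r_pos hu.r_lt_one hu'.R_pos hu'.R_lt_one
  have hβ : 0 < β := Real.logb_pos ((one_lt_inv₀ hu.R_pos).2 hu.R_lt_one)
    ((one_lt_inv₀ hu'.r_pos).2 hu'.r_lt_one)
  refine ⟨fun t => M * C' / (K / C) ^ α * t ^ α + M * C' / (K / C) ^ β * t ^ β,
    isQSGauge_add_rpow (by positivity) (by positivity) hα hβ, ?_⟩
  intro p q P Q a hP hQ haP haQ t u ht hu_le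
  rcases le_or_gt q p with hqp | hpq
  · have hρ := (hu.decay hqp hQ hP ⟨a, haQ, haP⟩).1
    have hρ' := (hu'.decay hqp hQ hP ⟨a, haQ, haP⟩).2
    have ht' : K / C * r ^ (p - q) ≤ t :=
      calc K / C * r ^ (p - q) = K * (r ^ (p - q) / C) := by ring
        _ ≤ t := (mul_le_mul_of_nonneg_left hρ hK.le).trans ht
    have hu_bound : u ≤ M * C' * R' ^ (p - q) :=
      calc u ≤ M * (C' * R' ^ (p - q)) := hu_le.trans (mul_le_mul_of_nonneg_left hρ' hM.le)
        _ = M * C' * R' ^ (p - q) := by ring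
    have ht0 : 0 ≤ t := (by have := hu.r_pos; positivity : 0 ≤ K / C * r ^ (p - q)).trans ht'
    exact (le_mul_rpow_logb_of_le_pow hu.r_pos hu.r_lt_one.ne hu'.R_pos hα.le (div_pos hK hC)
      (by positivity) ht' hu_bound).trans (le_add_of_nonneg_right (by positivity))
  · have hρ := (hu.sdiam_div_sdiam_bounds_of_lt hmet hpq hP hQ haP haQ).1
    have hρ' := (hu'.sdiam_div_sdiam_bounds_of_lt hmet' hpq hP hQ haP haQ).2
    have ht' : K / C * R⁻¹ ^ (q - p) ≤ t :=
      calc K / C * R⁻¹ ^ (q - p) = K * (R⁻¹ ^ (q - p) / C) := by ring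
        _ ≤ t := (mul_le_mul_of_nonneg_left hρ hK.le).trans ht
    have hu_bound : u ≤ M * C' * r'⁻¹ ^ (q - p) :=
      calc u ≤ M * (C' * r'⁻¹ ^ (q - p)) := hu_le.trans (mul_le_mul_of_nonneg_left hρ' hM.le)
        _ = M * C' * r'⁻¹ ^ (q - p) := by ring
    have ht0 : 0 ≤ t := (by have := hu.R_pos; positivity : 0 ≤ K / C * R⁻¹ ^ (q - p)).trans ht'
    exact (le_mul_rpow_logb_of_le_pow (inv_pos.2 hu.R_pos) (inv_ne_one.2 hu.R_lt_one.ne)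
      (inv_pos.2 hu'.r_pos) hβ.le (div_pos hK hC) (by positivity) ht' hu_bound).trans
      (le_add_of_nonneg_left (by positivity))

theorem stmt2_general {X : Type*} [TopologicalSpace X] (CS : CellStructure X) (d d' : X → X → ℝ)
    (hmet : IsMetricOn d) (hmet' : IsMetricOn d')
    (hund : IsUndistorted CS.cells d) (hund' : IsUndistorted CS.cells d') :
    ∃ η : ℝ → ℝ, IsQSGauge η ∧ QSIneq d d' (fun x : X => x) η := by
  obtain ⟨r, R, C, δ, hu⟩ := hund
  obtain ⟨r', R', C', δ', hu'⟩ := hund'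
  have hr := hu.r_pos
  have hC := hu.C_pos
  have hδ := hu.δ_pos
  have hr' := hu'.r_pos
  have hC' := hu'.C_pos
  have hδ' := hu'.δ_pos
  obtain ⟨η, hη, hη_bound⟩ := exists_isQSGauge_of_sdiam_div_sdiam hu hu' hmet hmet'
    (K := δ / ((1 + C) * C / r)) (M := (1 + C') * C' / r' / δ') (by positivity) (by positivity)
  refine ⟨η, hη, fun a b c hab hac _ => ?_⟩
  obtain ⟨m₁, h₁⟩ := hu.exists_isSeparationLevel hmet hab
  obtain ⟨m₂, h₂⟩ := hu.exists_isSeparationLevel hmet hac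
  obtain ⟨F₁, hF₁, haF₁⟩ := CS.exists_mem_cells (m₁ + 1) a
  obtain ⟨F₂, hF₂, haF₂⟩ := CS.exists_mem_cells (m₂ + 1) a
  exact hη_bound hF₁ hF₂ haF₁ haF₂
    (hu.dist_div_dist_bounds hmet h₁ h₂ hF₁ haF₁ hF₂ haF₂).1
    (hu'.dist_div_dist_bounds hmet' h₁ h₂ hF₁ haF₁ hF₂ haF₂).2

/-- Any two undistorted metrics on a finitely ramified fractal are
quasisymmetrically equivalent: the identity map is an `η`-quasisymmetry for some
homeomorphism `η` of `[0,∞)`. -/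
theorem stmt2 {X : Type*} [TopologicalSpace X] [CompactSpace X] [ConnectedSpace X]
    [TopologicalSpace.MetrizableSpace X] (CS : CellStructure X) (d d' : X → X → ℝ)
    (hmet : IsMetricOn d) (htop : InducesTopology d)
    (hmet' : IsMetricOn d') (htop' : InducesTopology d')
    (hund : IsUndistorted CS.cells d) (hund' : IsUndistorted CS.cells d') :
    ∃ η : ℝ → ℝ, IsQSGauge η ∧ QSIneq d d' (fun x : X => x) η :=
  stmt2_general CS d d' hmet hmet' hund hund'
end

section
/- Let X be a finitely ramified fractal, let d be an undistorted metric on X, and let d' be a metric on X such that the identity map (X,d) → (X,d') is an η-quasisymmetry for some homeomorphism η : [0,∞) → [0,∞). Then d' is undistorted. -/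
open Set

section AuxLemmas

variable {X : Type*}

lemma aux_dist_pos {d : X → X → ℝ} (hmet : IsMetricOn d) {a b : X} (h : a ≠ b) :
    0 < d a b :=
  lt_of_le_of_ne (hmet.1 a b) fun h0 => h ((hmet.2.1 a b).mp h0.symm)

lemma aux_bdd {d : X → X → ℝ} {M : ℝ} (hM : ∀ x y, d x y ≤ M) (S : Set X) :
    BddAbove (Set.image2 d S S) := by
  refine ⟨M, ?_⟩
  rintro x ⟨a, -, b, -, rfl⟩
  exact hM a b

lemma aux_sdiam_nonneg {d : X → X → ℝ} (hmet : IsMetricOn d) (S : Set X) :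
    0 ≤ sdiam d S := by
  apply Real.sSup_nonneg
  rintro x ⟨a, -, b, -, rfl⟩
  exact hmet.1 a b

lemma aux_le_sdiam {d : X → X → ℝ} {M : ℝ} (hM : ∀ x y, d x y ≤ M) {S : Set X} {a b : X}
    (ha : a ∈ S) (hb : b ∈ S) : d a b ≤ sdiam d S :=
  le_csSup (aux_bdd hM S) (Set.mem_image2_of_mem ha hb)

lemma aux_sdiam_mono {d : X → X → ℝ} {M : ℝ} (hM : ∀ x y, d x y ≤ M) {A B : Set X}
    (hA : A.Nonempty) (hAB : A ⊆ B) : sdiam d A ≤ sdiam d B :=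
  csSup_le_csSup (aux_bdd hM B) (hA.image2 hA) (Set.image2_subset hAB hAB)

lemma aux_exists_far {d : X → X → ℝ} (hmet : IsMetricOn d) {S : Set X}
    (hpos : 0 < sdiam d S) (a : X) :
    ∃ p ∈ S, sdiam d S / 4 < d a p := by
  have hne : (Set.image2 d S S).Nonempty := by
    by_contra h
    rw [Set.not_nonempty_iff_eq_empty] at h
    rw [sdiam, h, Real.sSup_empty] at hpos
    exact lt_irrefl _ hpos
  obtain ⟨x, hx, hgt⟩ := exists_lt_of_lt_csSup hne
    (show sdiam d S / 2 < sdiam d S by linarith)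
  obtain ⟨u, hu, v, hv, rfl⟩ := hx
  by_cases hau : sdiam d S / 4 < d a u
  · exact ⟨u, hu, hau⟩
  · refine ⟨v, hv, ?_⟩
    have htri := hmet.2.2.2 u a v
    have hsymm := hmet.2.2.1 u a
    push_neg at hau
    linarith

lemma aux_subU {d d' : X → X → ℝ} {η : ℝ → ℝ} (hmet : IsMetricOn d) (hmet' : IsMetricOn d')
    (hη : IsQSGauge η) (hqs : QSIneq d d' (fun x : X => x) η)
    {M M' : ℝ} (hM : ∀ x y, d x y ≤ M) (hM' : ∀ x y, d' x y ≤ M')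
    {A B : Set X} (hAB : A ⊆ B) (hBpos : 0 < sdiam d B)
    {c : ℝ} (hc : 0 ≤ c) (hsmall : sdiam d A ≤ c * sdiam d B) :
    sdiam d' A ≤ (η (4 * c) + 1) * sdiam d' B := by
  have hη4 : 0 ≤ η (4 * c) := hη.2.2.2.1 (Set.mem_Ici.mpr (by positivity))
  have hB'0 : 0 ≤ sdiam d' B := aux_sdiam_nonneg hmet' B
  apply Real.sSup_le _ (by nlinarith)
  rintro x ⟨a, ha, b, hb, rfl⟩
  by_cases hab : a = b
  · rw [(hmet'.2.1 a b).mpr hab]; nlinarith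
  · obtain ⟨p, hpB, hp⟩ := aux_exists_far hmet hBpos a
    have hap : a ≠ p := by
      intro h; rw [h, (hmet.2.1 p p).mpr rfl] at hp; linarith
    have hdap : 0 < d a p := by linarith
    have hd'ap : d' a p ≤ sdiam d' B := aux_le_sdiam hM' (hAB ha) hpB
    by_cases hbp : b = p
    · subst hbp
      have h2 := aux_le_sdiam hM' (hAB ha) (hAB hb)
      nlinarith
    · have hq := hqs a b p hab hap hbp
      dsimp only at hq
      have h1 : d a b ≤ c * sdiam d B := le_trans (aux_le_sdiam hM ha hb) hsmall
      have hratio : d a b / d a p ≤ 4 * c := by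
        rw [div_le_iff₀ hdap]
        nlinarith
      have hmono : η (d a b / d a p) ≤ η (4 * c) :=
        hη.2.1.monotoneOn
          (Set.mem_Ici.mpr (div_nonneg (hmet.1 a b) (hmet.1 a p)))
          (Set.mem_Ici.mpr (by positivity)) hratio
      have hd'pos : 0 < d' a p := aux_dist_pos hmet' hap
      have h2 : d' a b ≤ η (4 * c) * d' a p := by
        have h3 := (div_le_iff₀ hd'pos).mp (le_trans hq hmono)
        linarith
      nlinarith

lemma aux_subUstrict {d d' : X → X → ℝ} {η : ℝ → ℝ} (hmet : IsMetricOn d)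
    (hmet' : IsMetricOn d')
    (hη : IsQSGauge η) (hqs : QSIneq d d' (fun x : X => x) η)
    {M M' : ℝ} (hM : ∀ x y, d x y ≤ M) (hM' : ∀ x y, d' x y ≤ M')
    {A B : Set X} (hAB : A ⊆ B) (hBpos : 0 < sdiam d B)
    {c : ℝ} (hc : 0 ≤ c) (hlt : c < 1/4) (hsmall : sdiam d A ≤ c * sdiam d B) :
    sdiam d' A ≤ η (4 * c) * sdiam d' B := by
  have hη4 : 0 ≤ η (4 * c) := hη.2.2.2.1 (Set.mem_Ici.mpr (by positivity))
  have hB'0 : 0 ≤ sdiam d' B := aux_sdiam_nonneg hmet' B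
  apply Real.sSup_le _ (by nlinarith)
  rintro x ⟨a, ha, b, hb, rfl⟩
  by_cases hab : a = b
  · rw [(hmet'.2.1 a b).mpr hab]; nlinarith
  · obtain ⟨p, hpB, hp⟩ := aux_exists_far hmet hBpos a
    have hap : a ≠ p := by
      intro h; rw [h, (hmet.2.1 p p).mpr rfl] at hp; linarith
    have hdap : 0 < d a p := by linarith
    have hd'ap : d' a p ≤ sdiam d' B := aux_le_sdiam hM' (hAB ha) hpB
    have h1 : d a b ≤ c * sdiam d B := le_trans (aux_le_sdiam hM ha hb) hsmall
    have hbp : b ≠ p := by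
      intro h; subst h
      nlinarith
    have hq := hqs a b p hab hap hbp
    dsimp only at hq
    have hratio : d a b / d a p ≤ 4 * c := by
      rw [div_le_iff₀ hdap]
      nlinarith
    have hmono : η (d a b / d a p) ≤ η (4 * c) :=
      hη.2.1.monotoneOn
        (Set.mem_Ici.mpr (div_nonneg (hmet.1 a b) (hmet.1 a p)))
        (Set.mem_Ici.mpr (by positivity)) hratio
    have hd'pos : 0 < d' a p := aux_dist_pos hmet' hap
    have h2 : d' a b ≤ η (4 * c) * d' a p := by
      have h3 := (div_le_iff₀ hd'pos).mp (le_trans hq hmono)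
      linarith
    nlinarith

lemma aux_subL {d d' : X → X → ℝ} {η : ℝ → ℝ} (hmet : IsMetricOn d) (hmet' : IsMetricOn d')
    (hη : IsQSGauge η) (hqs : QSIneq d d' (fun x : X => x) η)
    {M M' : ℝ} (hM : ∀ x y, d x y ≤ M) (hM' : ∀ x y, d' x y ≤ M')
    {A B : Set X} (hAB : A ⊆ B) (hApos : 0 < sdiam d A)
    {c : ℝ} (hc : 0 ≤ c) (hbig : sdiam d B ≤ c * sdiam d A) :
    sdiam d' B ≤ 4 * (η (2 * c) + 1) * sdiam d' A := by
  have hη2 : 0 ≤ η (2 * c) := hη.2.2.2.1 (Set.mem_Ici.mpr (by positivity))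
  have hA'0 : 0 ≤ sdiam d' A := aux_sdiam_nonneg hmet' A
  by_cases hB' : sdiam d' B ≤ 0
  · nlinarith
  push_neg at hB'
  have hne : (Set.image2 d A A).Nonempty := by
    by_contra h
    rw [Set.not_nonempty_iff_eq_empty] at h
    have : sdiam d A = 0 := by rw [sdiam, h, Real.sSup_empty]
    linarith
  obtain ⟨x, hx, hgt⟩ := exists_lt_of_lt_csSup hne
    (show sdiam d A / 2 < sdiam d A by linarith)
  obtain ⟨u, hu, v, hv, rfl⟩ := hx
  have huv : u ≠ v := by
    intro h; rw [(hmet.2.1 u v).mpr h] at hgt; linarith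
  obtain ⟨p, hpB, hp⟩ := aux_exists_far hmet' hB' u
  have hup : u ≠ p := by
    intro h; rw [h, (hmet'.2.1 p p).mpr rfl] at hp; linarith
  have hd'uv : d' u v ≤ sdiam d' A := aux_le_sdiam hM' hu hv
  by_cases hpv : p = v
  · subst hpv
    nlinarith
  · have hq := hqs u p v hup huv hpv
    dsimp only at hq
    have hduv : 0 < d u v := by linarith
    have hdup : d u p ≤ c * sdiam d A :=
      le_trans (aux_le_sdiam hM (hAB hu) hpB) hbig
    have hratio : d u p / d u v ≤ 2 * c := by
      rw [div_le_iff₀ hduv]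
      nlinarith
    have hmono : η (d u p / d u v) ≤ η (2 * c) :=
      hη.2.1.monotoneOn
        (Set.mem_Ici.mpr (div_nonneg (hmet.1 u p) (hmet.1 u v)))
        (Set.mem_Ici.mpr (by positivity)) hratio
    have hd'uvpos : 0 < d' u v := aux_dist_pos hmet' huv
    have h2 : d' u p ≤ η (2 * c) * d' u v := by
      have h3 := (div_le_iff₀ hd'uvpos).mp (le_trans hq hmono)
      linarith
    nlinarith

lemma aux_lemI {d d' : X → X → ℝ} {η : ℝ → ℝ} (hmet : IsMetricOn d) (hmet' : IsMetricOn d')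
    (hη : IsQSGauge η) (hqs : QSIneq d d' (fun x : X => x) η)
    {M M' : ℝ} (hM : ∀ x y, d x y ≤ M) (hM' : ∀ x y, d' x y ≤ M')
    {A B : Set X} (hz : (A ∩ B).Nonempty) (hBpos : 0 < sdiam d B)
    {c : ℝ} (hc : 0 ≤ c) (h : sdiam d A ≤ c * sdiam d B) :
    sdiam d' A ≤ (η (4 * c) + 1) * (4 * (η (2 * (c + 1)) + 1)) * sdiam d' B := by
  obtain ⟨z, hzA, hzB⟩ := hz
  have hBU : B ⊆ A ∪ B := Set.subset_union_right
  have hAU : A ⊆ A ∪ B := Set.subset_union_left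
  have hUB : sdiam d B ≤ sdiam d (A ∪ B) := aux_sdiam_mono hM ⟨z, hzB⟩ hBU
  have hUpos : 0 < sdiam d (A ∪ B) := lt_of_lt_of_le hBpos hUB
  have hA0 : 0 ≤ sdiam d A := aux_sdiam_nonneg hmet A
  have hB0 : 0 ≤ sdiam d B := aux_sdiam_nonneg hmet B
  have hUle : sdiam d (A ∪ B) ≤ sdiam d A + sdiam d B := by
    apply Real.sSup_le _ (by linarith)
    rintro x ⟨a, haU, b, hbU, rfl⟩
    have htri := hmet.2.2.2 a z b
    rcases haU with haA | haB <;> rcases hbU with hbA | hbB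
    · linarith [aux_le_sdiam hM haA hbA]
    · linarith [aux_le_sdiam hM haA hzA, aux_le_sdiam hM hzB hbB]
    · have hsy := hmet.2.2.1 a z
      have hsy2 := hmet.2.2.1 z b
      linarith [aux_le_sdiam hM hzA hbA, aux_le_sdiam hM haB hzB,
        hmet.2.2.2 a z b]
    · linarith [aux_le_sdiam hM haB hbB]
  have h1 : sdiam d A ≤ c * sdiam d (A ∪ B) := by nlinarith
  have h2 : sdiam d (A ∪ B) ≤ (c + 1) * sdiam d B := by nlinarith
  have hU' := aux_subU hmet hmet' hη hqs hM hM' hAU hUpos hc h1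
  have hL' := aux_subL hmet hmet' hη hqs hM hM' hBU hBpos
    (show (0:ℝ) ≤ c + 1 by linarith) h2
  have hη4 : 0 ≤ η (4 * c) := hη.2.2.2.1 (Set.mem_Ici.mpr (by positivity))
  have hη2 : 0 ≤ η (2 * (c + 1)) := hη.2.2.2.1 (Set.mem_Ici.mpr (by positivity))
  have hB'0 : 0 ≤ sdiam d' B := aux_sdiam_nonneg hmet' B
  have hU'0 : 0 ≤ sdiam d' (A ∪ B) := aux_sdiam_nonneg hmet' (A ∪ B)
  nlinarith [mul_le_mul_of_nonneg_left hL' (show (0:ℝ) ≤ η (4 * c) + 1 by linarith)]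

lemma aux_bounded {X : Type*} [TopologicalSpace X] [CompactSpace X]
    {d : X → X → ℝ} (hmet : IsMetricOn d) (htop : InducesTopology d) :
    ∃ M : ℝ, ∀ x y : X, d x y ≤ M := by
  rcases isEmpty_or_nonempty X with h | h
  · exact ⟨0, fun x => (h.false x).elim⟩
  · obtain ⟨x₀⟩ := h
    have hopen : ∀ n : ℕ, IsOpen {y : X | d x₀ y < n} := by
      intro n
      rw [htop]
      intro y hy
      simp only [Set.mem_setOf_eq] at hy
      refine ⟨n - d x₀ y, by linarith, fun z hz => ?_⟩
      simp only [Set.mem_setOf_eq]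
      have htri := hmet.2.2.2 x₀ y z
      linarith
    have hcover : (Set.univ : Set X) ⊆ ⋃ n : ℕ, {y : X | d x₀ y < n} := by
      intro y _
      refine Set.mem_iUnion.mpr ⟨⌊d x₀ y⌋₊ + 1, ?_⟩
      simp only [Set.mem_setOf_eq]
      push_cast
      exact Nat.lt_floor_add_one _
    obtain ⟨t, ht⟩ := isCompact_univ.elim_finite_subcover _ hopen hcover
    refine ⟨2 * ((t.sup id : ℕ) : ℝ), fun x y => ?_⟩
    have hb : ∀ z : X, d x₀ z ≤ ((t.sup id : ℕ) : ℝ) := by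
      intro z
      obtain ⟨n, hn, hz⟩ := Set.mem_iUnion₂.mp (ht (Set.mem_univ z))
      simp only [Set.mem_setOf_eq] at hz
      have hle : (n : ℝ) ≤ ((t.sup id : ℕ) : ℝ) := by
        exact_mod_cast Finset.le_sup (f := id) hn
      linarith
    have h1 := hb x
    have h2 := hb y
    have htri := hmet.2.2.2 x x₀ y
    have hsym := hmet.2.2.1 x x₀
    linarith

end AuxLemmas
set_option maxHeartbeats 1600000 in
/-- If `d` is an undistorted metric on a finitely ramified fractal `X`
and the identity map `(X,d) → (X,d')` is an `η`-quasisymmetry, then `d'` is also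
undistorted. -/
theorem stmt3 {X : Type*} [TopologicalSpace X] [CompactSpace X] [ConnectedSpace X]
    [TopologicalSpace.MetrizableSpace X] (CS : CellStructure X) (d d' : X → X → ℝ)
    (hmet : IsMetricOn d) (htop : InducesTopology d) (hund : IsUndistorted CS.cells d)
    (hmet' : IsMetricOn d') (htop' : InducesTopology d')
    (η : ℝ → ℝ) (hη : IsQSGauge η) (hqs : QSIneq d d' (fun x : X => x) η) :
    IsUndistorted CS.cells d' := by
  classical
  obtain ⟨r, R, C, δ, hr, hrR, hR1, hC, hδ, hdec, hsep⟩ := hund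
  have hηnn : ∀ t : ℝ, 0 ≤ t → 0 ≤ η t := fun t ht => hη.2.2.2.1 (Set.mem_Ici.mpr ht)
  have hηle : ∀ s t : ℝ, 0 ≤ s → s ≤ t → η s ≤ η t := fun s t hs hst =>
    hη.2.1.monotoneOn (Set.mem_Ici.mpr hs) (Set.mem_Ici.mpr (hs.trans hst)) hst
  have hη0 : η 0 = 0 := hη.2.2.1
  have hC0 : (0:ℝ) < C := lt_of_lt_of_le one_pos hC
  have hR0 : (0:ℝ) < R := lt_of_lt_of_le hr hrR
  by_cases hnt : Nontrivial X
  swap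
  · exfalso
    have hsub : Subsingleton X := not_nontrivial_iff_subsingleton.mp hnt
    have huniv : (Set.univ : Set X) ∈ CS.cells 0 := by rw [CS.root]; rfl
    obtain ⟨p, hp⟩ := CS.interior_nonempty 0 _ huniv
    have hzero : sdiam d (Set.univ : Set X) = 0 := by
      have himg : Set.image2 d (Set.univ : Set X) Set.univ = {0} := by
        apply Set.Subset.antisymm
        · rintro x ⟨a, -, b, -, rfl⟩
          simp [(hmet.2.1 a b).mpr (Subsingleton.elim a b)]
        · rintro x hx
          rw [Set.mem_singleton_iff] at hx
          subst hx
          exact ⟨p, Set.mem_univ p, p, Set.mem_univ p, (hmet.2.1 p p).mpr rfl⟩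
      rw [sdiam, himg, csSup_singleton]
    have h00 := (hdec 0 0 le_rfl _ huniv _ huniv
      ⟨p, Set.mem_inter (Set.mem_univ p) (Set.mem_univ p)⟩).1
    rw [hzero] at h00
    simp only [Nat.sub_self, pow_zero, zero_div] at h00
    have hCpos : (0:ℝ) < 1 / C := by positivity
    linarith
  · haveI := hnt
    obtain ⟨M, hM⟩ := aux_bounded hmet htop
    obtain ⟨M', hM'⟩ := aux_bounded hmet' htop'
    -- every cell has two distinct points
    have hcell2 : ∀ n (E : Set X), E ∈ CS.cells n → ∃ a ∈ E, ∃ b ∈ E, a ≠ b := by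
      intro n E hE
      obtain ⟨x, hx⟩ := CS.interior_nonempty n E hE
      by_contra h
      push_neg at h
      have hxE : x ∈ E := interior_subset hx
      have hEx : E = {x} := by
        apply Set.Subset.antisymm
        · intro y hy
          rw [Set.mem_singleton_iff]
          exact h y hy x hxE
        · intro y hy
          rw [Set.mem_singleton_iff] at hy
          subst hy
          exact hxE
      have hintx : interior E = {x} := by
        apply Set.Subset.antisymm
        · rw [hEx] at *
          exact interior_subset
        · intro y hy
          rw [Set.mem_singleton_iff] at hy
          subst hy
          exact hx
      have hopen : IsOpen ({x} : Set X) := hintx ▸ isOpen_interior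
      have hclosed : IsClosed ({x} : Set X) := by
        rw [← isOpen_compl_iff, htop]
        intro y hy
        have hyx : y ≠ x := by simpa using hy
        refine ⟨d y x, aux_dist_pos hmet hyx, fun z hz => ?_⟩
        simp only [Set.mem_compl_iff, Set.mem_singleton_iff]
        intro hzx
        subst hzx
        exact lt_irrefl _ hz
      have huniv2 : ({x} : Set X) = Set.univ :=
        (IsClopen.eq_univ ⟨hclosed, hopen⟩) ⟨x, rfl⟩
      obtain ⟨u, v, huv⟩ := hnt
      apply huv
      have hu : u ∈ ({x} : Set X) := huniv2 ▸ Set.mem_univ u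
      have hv : v ∈ ({x} : Set X) := huniv2 ▸ Set.mem_univ v
      rw [Set.mem_singleton_iff] at hu hv
      rw [hu, hv]
    have hEne : ∀ n (E : Set X), E ∈ CS.cells n → E.Nonempty := fun n E hE =>
      Set.Nonempty.mono interior_subset (CS.interior_nonempty n E hE)
    have hpos : ∀ n (E : Set X), E ∈ CS.cells n → 0 < sdiam d E := by
      intro n E hE
      obtain ⟨a, ha, b, hb, hab⟩ := hcell2 n E hE
      exact lt_of_lt_of_le (aux_dist_pos hmet hab) (aux_le_sdiam hM ha hb)
    have hpos' : ∀ n (E : Set X), E ∈ CS.cells n → 0 < sdiam d' E := by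
      intro n E hE
      obtain ⟨a, ha, b, hb, hab⟩ := hcell2 n E hE
      exact lt_of_lt_of_le (aux_dist_pos hmet' hab) (aux_le_sdiam hM' ha hb)
    -- gauge constants
    obtain ⟨s₀, hs₀mem, hs₀⟩ := hη.2.2.2.2 (show (1/2 : ℝ) ∈ Set.Ici (0:ℝ) by norm_num)
    have hs₀pos : 0 < s₀ := by
      rcases (Set.mem_Ici.mp hs₀mem).lt_or_eq with h | h
      · exact h
      · rw [← h, hη0] at hs₀; norm_num at hs₀
    obtain ⟨k₀, hk₀⟩ := exists_pow_lt_of_lt_one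
      (show (0:ℝ) < min (s₀ / 4) (1/8) / C by positivity) hR1
    set k := max k₀ 1 with hk_def
    have hk1 : 1 ≤ k := le_max_right _ _
    have hRk : C * R ^ k ≤ min (s₀ / 4) (1/8) := by
      have h1 : R ^ k ≤ R ^ k₀ := pow_le_pow_of_le_one hR0.le hR1.le (le_max_left _ _)
      rw [lt_div_iff₀ hC0] at hk₀
      nlinarith
    have hθ1 : C * R ^ k ≤ s₀ / 4 := le_trans hRk (min_le_left _ _)
    have hθ2 : C * R ^ k ≤ 1/8 := le_trans hRk (min_le_right _ _)
    have hθ0 : (0:ℝ) ≤ C * R ^ k := by positivity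
    set K := (η (4 * C) + 1) * (4 * (η (2 * (C + 1)) + 1)) with hK_def
    have hK4 : (4:ℝ) ≤ K := by
      nlinarith [hηnn (4 * C) (by positivity), hηnn (2 * (C + 1)) (by positivity)]
    have hK0 : (0:ℝ) < K := by linarith
    set lam := (1/2 : ℝ) ^ ((k : ℝ)⁻¹) with hlam_def
    have hkR0 : (0:ℝ) < (k : ℝ) := by exact_mod_cast Nat.pos_of_ne_zero (by omega)
    have hlam0 : 0 < lam := Real.rpow_pos_of_pos (by norm_num) _
    have hlam1 : lam < 1 := Real.rpow_lt_one (by norm_num) (by norm_num) (by positivity)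
    have hlamk : lam ^ k = 1/2 := by
      rw [hlam_def, ← Real.rpow_natCast ((1/2 : ℝ) ^ ((k : ℝ)⁻¹)) k,
        ← Real.rpow_mul (by norm_num), inv_mul_cancel₀ (ne_of_gt hkR0), Real.rpow_one]
    set c₀ := (4 * (η (2 * (C / r)) + 1))⁻¹ with hc₀_def
    have hc₀aux : 0 ≤ η (2 * (C / r)) := hηnn _ (by positivity)
    have hc₀den : (0:ℝ) < 4 * (η (2 * (C / r)) + 1) := by nlinarith
    have hc₀0 : 0 < c₀ := by rw [hc₀_def]; exact inv_pos.mpr hc₀den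
    -- same level comparability
    have hsame : ∀ n : ℕ, ∀ E₁ ∈ CS.cells n, ∀ E₂ ∈ CS.cells n,
        (E₁ ∩ E₂).Nonempty → sdiam d' E₁ ≤ K * sdiam d' E₂ := by
      intro n E₁ hE₁ E₂ hE₂ hz
      have hup := (hdec n n le_rfl E₂ hE₂ E₁ hE₁ (by rwa [Set.inter_comm] at hz)).2
      rw [Nat.sub_self, pow_zero, mul_one] at hup
      have h2 : sdiam d E₁ ≤ C * sdiam d E₂ := (div_le_iff₀ (hpos n E₂ hE₂)).mp hup
      have := aux_lemI hmet hmet' hη hqs hM hM' hz (hpos n E₂ hE₂) hC0.le h2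
      rwa [← hK_def] at this
    -- contraction over k levels
    have hcontr : ∀ j : ℕ, ∀ F ∈ CS.cells j, ∀ G ∈ CS.cells (j + k), G ⊆ F →
        sdiam d' G ≤ (1/2) * sdiam d' F := by
      intro j F hF G hG hsub
      have hzz : (F ∩ G).Nonempty := by
        obtain ⟨g, hg⟩ := hEne _ G hG
        exact ⟨g, hsub hg, hg⟩
      have hup := (hdec j (j + k) (Nat.le_add_right _ _) F hF G hG hzz).2
      rw [Nat.add_sub_cancel_left] at hup
      have hsm : sdiam d G ≤ (C * R ^ k) * sdiam d F := (div_le_iff₀ (hpos j F hF)).mp hup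
      have h := aux_subUstrict hmet hmet' hη hqs hM hM' hsub (hpos j F hF) hθ0
        (by linarith) hsm
      have hη12 : η (4 * (C * R ^ k)) ≤ 1/2 := by
        rw [← hs₀]
        exact hηle _ _ (by positivity) (by linarith)
      have := mul_le_mul_of_nonneg_right hη12 (aux_sdiam_nonneg hmet' F)
      linarith
    -- parent comparability (one level down)
    have hpar : ∀ j : ℕ, ∀ F ∈ CS.cells j, ∀ G ∈ CS.cells (j + 1), G ⊆ F →
        c₀ * sdiam d' F ≤ sdiam d' G := by
      intro j F hF G hG hsub
      have hzz : (F ∩ G).Nonempty := by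
        obtain ⟨g, hg⟩ := hEne _ G hG
        exact ⟨g, hsub hg, hg⟩
      have hlow := (hdec j (j + 1) (Nat.le_add_right _ _) F hF G hG hzz).1
      rw [Nat.add_sub_cancel_left, pow_one] at hlow
      have hFpos := hpos j F hF
      have hGpos := hpos (j + 1) G hG
      have hbig : sdiam d F ≤ (C / r) * sdiam d G := by
        rw [div_le_div_iff₀ hC0 hFpos] at hlow
        rw [div_mul_eq_mul_div, le_div_iff₀ hr]
        linarith
      have h := aux_subL hmet hmet' hη hqs hM hM' hsub hGpos
        (show (0:ℝ) ≤ C / r by positivity) hbig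
      rw [hc₀_def, inv_mul_le_iff₀ hc₀den]
      exact h
    -- ancestors
    have hanc : ∀ t m : ℕ, ∀ E' ∈ CS.cells (m + t), ∃ F ∈ CS.cells m, E' ⊆ F := by
      intro t
      induction t with
      | zero => exact fun m E' h => ⟨E', h, subset_rfl⟩
      | succ t ih =>
        intro m E' h
        obtain ⟨P, hP, hEP⟩ := CS.exists_parent (m + t) E' h
        obtain ⟨F, hF, hPF⟩ := ih m P hP
        exact ⟨F, hF, hEP.trans hPF⟩
    -- upper decay
    have hupd : ∀ t m : ℕ, ∀ E ∈ CS.cells m, ∀ E' ∈ CS.cells (m + t),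
        (E ∩ E').Nonempty → sdiam d' E' ≤ 2 * K * lam ^ t * sdiam d' E := by
      intro t
      induction t using Nat.strong_induction_on with
      | _ t ih =>
        intro m E hE E' hE' hz
        by_cases htk : t < k
        · obtain ⟨F, hF, hsub⟩ := hanc t m E' hE'
          have h1 : sdiam d' E' ≤ sdiam d' F :=
            aux_sdiam_mono hM' (hEne _ E' hE') hsub
          have h2 : sdiam d' F ≤ K * sdiam d' E := by
            apply hsame m F hF E hE
            obtain ⟨z, hz1, hz2⟩ := hz
            exact ⟨z, hsub hz2, hz1⟩
          have h3 : lam ^ k ≤ lam ^ t := pow_le_pow_of_le_one hlam0.le hlam1.le htk.le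
          rw [hlamk] at h3
          nlinarith [aux_sdiam_nonneg hmet' E,
            mul_nonneg (mul_nonneg hK0.le (show (0:ℝ) ≤ 2 * lam ^ t - 1 by linarith))
              (aux_sdiam_nonneg hmet' E)]
        · push_neg at htk
          have hcast : m + (t - k) + k = m + t := by omega
          obtain ⟨F, hF, hsub⟩ := hanc k (m + (t - k)) E' (by rw [hcast]; exact hE')
          have h1 : sdiam d' E' ≤ (1/2) * sdiam d' F :=
            hcontr _ F hF E' (by rw [hcast]; exact hE') hsub
          have h2 : sdiam d' F ≤ 2 * K * lam ^ (t - k) * sdiam d' E := by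
            apply ih (t - k) (by omega) m E hE F hF
            obtain ⟨z, hz1, hz2⟩ := hz
            exact ⟨z, hz1, hsub hz2⟩
          have h3 : lam ^ t = lam ^ (t - k) * (1/2) := by
            rw [← hlamk, ← pow_add]
            congr 1
            omega
          rw [h3]
          linarith
    -- lower decay
    have hlod : ∀ t m : ℕ, ∀ E ∈ CS.cells m, ∀ E' ∈ CS.cells (m + t),
        (E ∩ E').Nonempty → c₀ ^ t * sdiam d' E ≤ K * sdiam d' E' := by
      intro t
      induction t with
      | zero =>
        intro m E hE E' hE' hz
        have := hsame m E hE E' hE' hz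
        simpa using this
      | succ t ih =>
        intro m E hE E' hE' hz
        obtain ⟨F, hF, hsub⟩ := CS.exists_parent (m + t) E' hE'
        have h1 := hpar (m + t) F hF E' hE' hsub
        have h2 : c₀ ^ t * sdiam d' E ≤ K * sdiam d' F := by
          apply ih m E hE F hF
          obtain ⟨z, hz1, hz2⟩ := hz
          exact ⟨z, hz1, hsub hz2⟩
        rw [pow_succ]
        nlinarith [mul_le_mul_of_nonneg_left h2 hc₀0.le,
          mul_le_mul_of_nonneg_left h1 hK0.le]
    -- separation
    have hδη : 0 < η (1/δ) := by
      have := hη.2.1 (Set.mem_Ici.mpr le_rfl) (Set.mem_Ici.mpr (by positivity : (0:ℝ) ≤ 1/δ))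
        (by positivity : (0:ℝ) < 1/δ)
      rwa [hη0] at this
    have hsep' : ∀ n : ℕ, ∀ E₁ ∈ CS.cells n, ∀ E₂ ∈ CS.cells n, Disjoint E₁ E₂ →
        (4 * η (1/δ))⁻¹ * sdiam d' E₁ ≤ sdist d' E₁ E₂ := by
      intro n E₁ hE₁ E₂ hE₂ hdisj
      have hne₁ := hEne n E₁ hE₁
      have hne₂ := hEne n E₂ hE₂
      apply le_csInf (hne₁.image2 hne₂)
      rintro b ⟨x, hx, y, hy, rfl⟩
      have hdxy : δ * sdiam d E₁ ≤ d x y := by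
        have h1 := hsep n E₁ hE₁ E₂ hE₂ hdisj
        have h2 : sdist d E₁ E₂ ≤ d x y := by
          apply csInf_le _ (Set.mem_image2_of_mem hx hy)
          refine ⟨0, ?_⟩
          rintro z ⟨a, -, b, -, rfl⟩
          exact hmet.1 a b
        linarith
      have hdxy0 : 0 < d x y :=
        lt_of_lt_of_le (mul_pos hδ (hpos n E₁ hE₁)) hdxy
      have hxy : x ≠ y := by
        intro h
        rw [h, (hmet.2.1 y y).mpr rfl] at hdxy0
        exact lt_irrefl _ hdxy0
      obtain ⟨p, hpE₁, hp⟩ := aux_exists_far hmet' (hpos' n E₁ hE₁) x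
      have hxp : x ≠ p := by
        intro h
        rw [h, (hmet'.2.1 p p).mpr rfl] at hp
        nlinarith [hpos' n E₁ hE₁]
      have hpy : p ≠ y := by
        intro h
        subst h
        exact absurd hy (Set.disjoint_left.mp hdisj hpE₁)
      have hq := hqs x p y hxp hxy hpy
      dsimp only at hq
      have hratio : d x p / d x y ≤ 1/δ := by
        rw [div_le_div_iff₀ hdxy0 hδ]
        have h4 : d x p ≤ sdiam d E₁ := aux_le_sdiam hM hx hpE₁
        nlinarith
      have hmono2 : η (d x p / d x y) ≤ η (1/δ) :=
        hηle _ _ (div_nonneg (hmet.1 _ _) (hmet.1 _ _)) hratio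
      have hd'xy : 0 < d' x y := aux_dist_pos hmet' hxy
      have h3 : d' x p ≤ η (1/δ) * d' x y := by
        have h5 := (div_le_iff₀ hd'xy).mp (le_trans hq hmono2)
        linarith
      rw [inv_mul_le_iff₀ (by positivity : (0:ℝ) < 4 * η (1/δ))]
      linarith
    -- assemble
    refine ⟨min c₀ lam, lam, 2 * K, (4 * η (1/δ))⁻¹, lt_min hc₀0 hlam0,
      min_le_right _ _, hlam1, by linarith, inv_pos.mpr (by linarith), ?_, hsep'⟩
    intro m n hmn E hE E' hE' hz
    obtain ⟨t, rfl⟩ : ∃ t, n = m + t := ⟨n - m, by omega⟩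
    have hsub' : m + t - m = t := by omega
    rw [hsub']
    have hEpos' := hpos' m E hE
    constructor
    · rw [le_div_iff₀ hEpos', div_mul_eq_mul_div,
        div_le_iff₀ (show (0:ℝ) < 2 * K by linarith)]
      have hl := hlod t m E hE E' hE' hz
      have h1 : (min c₀ lam) ^ t ≤ c₀ ^ t :=
        pow_le_pow_left₀ (le_min hc₀0.le hlam0.le) (min_le_left _ _) t
      nlinarith [mul_le_mul_of_nonneg_right h1 (aux_sdiam_nonneg hmet' E),
        mul_nonneg hK0.le (aux_sdiam_nonneg hmet' E')]
    · rw [div_le_iff₀ hEpos']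
      exact hupd t m E hE E' hE' hz
end

section
/- Let X be a finitely ramified fractal and k ∈ ℕ such that, for every n, every n-cell of X contains at least two disjoint (n+k)-cells and no two disjoint n-cells of X both intersect a common (n+k)-cell. Let α be a real number with 1 < α ≤ (3/2)^{1/k}. Then the metric d_α, defined by d_α(p,q) = inf { Σ_{i=1}^{l} α^{−|E_i|} : E_1,…,E_l is a cell chain connecting p and q }, is an undistorted metric on X. -/
open Set

/-- The weight `Σ α^{-|E_i|}` of a chain of cells, each recorded with its level. -/
noncomputable def chainWeight {X : Type*} (α : ℝ) (c : List (ℕ × Set X)) : ℝ :=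
  (c.map fun e => α ^ (-(e.1 : ℤ))).sum

/-- `c` is a cell chain connecting `p` to `q`: a nonempty finite sequence of cells
(recorded with their levels) with `p` in the first cell, `q` in the last one, and
consecutive cells intersecting. -/
def IsCellChain {X : Type*} [TopologicalSpace X] (CS : CellStructure X) (p q : X)
    (c : List (ℕ × Set X)) : Prop :=
  c ≠ [] ∧ (∀ e ∈ c, e.2 ∈ CS.cells e.1) ∧
    (∃ e, c.head? = some e ∧ p ∈ e.2) ∧ (∃ e, c.getLast? = some e ∧ q ∈ e.2) ∧
    List.Chain' (fun e f => (e.2 ∩ f.2).Nonempty) c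

/-- The distance function `d_α(p,q) = inf { Σ α^{-|E_i|} }` over all cell chains
connecting `p` and `q`. -/
noncomputable def dAlpha {X : Type*} [TopologicalSpace X] (CS : CellStructure X)
    (α : ℝ) (p q : X) : ℝ :=
  sInf {s : ℝ | ∃ c : List (ℕ × Set X), IsCellChain CS p q c ∧ chainWeight α c = s}

/-- No intersecting pair of `n`-cells contains `p` and `q` respectively. -/
def NoPairAt {X : Type*} [TopologicalSpace X] (CS : CellStructure X) (p q : X)
    (n : ℕ) : Prop :=
  ∀ Ex ∈ CS.cells n, ∀ Ey ∈ CS.cells n, p ∈ Ex → q ∈ Ey → ¬(Ex ∩ Ey).Nonempty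

/-! The key estimate: a cell chain joining two disjoint `m`-cells has weight at least
`α^{-(m+k)}`. Either one of its cells has level at most `m + k`, or every cell of the chain lies
in an `(m+k)`-cell; since no `(m+k)`-cell meets both `m`-cells, the chain can be cut where these
`(m+k)`-cells start meeting the second `m`-cell, and each piece again joins two disjoint
`(m+k)`-cells. By induction on the length both pieces weigh at least `α^{-(m+2k)}`, and
`2 α^{-k} ≥ 1`.

Distinct points lie in disjoint cells of a common level (the nested cells around each point shrink
to it, and compactness separates them), so the estimate makes `d_α` positive off the diagonal.
It also bounds the diameter of an `n`-cell, which contains two disjoint `(n+k)`-cells, from below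
by `α^{-(n+2k)}`, and the distance between disjoint `n`-cells by `α^{-(n+k)}`; one-cell chains
bound the diameter from above by `α^{-n}`. -/

open Set

theorem List.exists_eq_append_of_not_head_of_getLast {β : Type*} {P : β → Prop} :
    ∀ {l : List β}, l ≠ [] → (∀ a ∈ l.head?, ¬P a) → (∀ b ∈ l.getLast?, P b) →
      ∃ l₁ l₂ a b, l = l₁ ++ l₂ ∧ l₁.getLast? = some a ∧ l₂.head? = some b ∧ ¬P a ∧ P b
  | [], hl, _, _ => absurd rfl hl
  | [a], _, ha, hb => absurd (hb a rfl) (ha a rfl)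
  | a :: b :: l, _, ha, hb => by
    by_cases hPb : P b
    · exact ⟨[a], b :: l, a, b, rfl, rfl, rfl, ha a rfl, hPb⟩
    · obtain ⟨l₁, l₂, x, y, hl, hx, hy, hPx, hPy⟩ :=
        exists_eq_append_of_not_head_of_getLast (l := b :: l) (by simp) (by simpa using hPb)
          (by simpa using hb)
      refine ⟨a :: l₁, l₂, x, y, by simp [hl], ?_, hy, hPx, hPy⟩
      cases l₁ <;> simp_all

theorem div_bounds_of_pow_bounds {a x y : ℝ} (ha : 0 < a) {j m n : ℕ} (hmn : m ≤ n)
    (hx : a ^ (m + j) ≤ x) (hx' : x ≤ a ^ m) (hy : a ^ (n + j) ≤ y) (hy' : y ≤ a ^ n) :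
    a ^ (n - m) / (a ^ j)⁻¹ ≤ y / x ∧ y / x ≤ (a ^ j)⁻¹ * a ^ (n - m) := by
  obtain ⟨t, rfl⟩ := Nat.exists_eq_add_of_le hmn
  rw [Nat.add_sub_cancel_left]
  have hx₀ : 0 < x := (pow_pos ha _).trans_le hx
  constructor
  · calc a ^ t / (a ^ j)⁻¹ = a ^ (m + t + j) / a ^ m := by field_simp; ring
      _ ≤ y / x := div_le_div₀ ((pow_pos ha _).le.trans hy) hy hx₀ hx'
  · calc y / x ≤ a ^ (m + t) / a ^ (m + j) := div_le_div₀ (by positivity) hy' (by positivity) hx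
      _ = (a ^ j)⁻¹ * a ^ t := by field_simp; ring

section ChainWeight

variable {X : Type*} {α : ℝ}

theorem chainWeight_eq_sum_inv_pow (α : ℝ) (c : List (ℕ × Set X)) :
    chainWeight α c = (c.map fun e => α⁻¹ ^ e.1).sum := by
  simp [chainWeight]

theorem chainWeight_nonneg (hα : 0 ≤ α) (c : List (ℕ × Set X)) : 0 ≤ chainWeight α c := by
  rw [chainWeight_eq_sum_inv_pow]
  exact List.sum_nonneg fun x hx => by
    obtain ⟨e, -, rfl⟩ := List.mem_map.1 hx
    positivity

theorem pow_le_chainWeight (hα : 0 ≤ α) {c : List (ℕ × Set X)} {e : ℕ × Set X} (he : e ∈ c) :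
    α⁻¹ ^ e.1 ≤ chainWeight α c := by
  rw [chainWeight_eq_sum_inv_pow]
  exact List.single_le_sum (fun x hx => by
    obtain ⟨e, -, rfl⟩ := List.mem_map.1 hx
    positivity) _ (List.mem_map_of_mem he)

theorem chainWeight_singleton (α : ℝ) (n : ℕ) (E : Set X) :
    chainWeight α [(n, E)] = α⁻¹ ^ n := by
  simp [chainWeight_eq_sum_inv_pow]

theorem chainWeight_append (α : ℝ) (c₁ c₂ : List (ℕ × Set X)) :
    chainWeight α (c₁ ++ c₂) = chainWeight α c₁ + chainWeight α c₂ := by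
  simp [chainWeight]

theorem chainWeight_reverse (α : ℝ) (c : List (ℕ × Set X)) :
    chainWeight α c.reverse = chainWeight α c := by
  simp [chainWeight, List.map_reverse, List.sum_reverse]

end ChainWeight

namespace CellStructure

variable {X : Type*} [TopologicalSpace X] (CS : CellStructure X)

def HasDisjointSubcells (k : ℕ) : Prop :=
  ∀ n : ℕ, ∀ E ∈ CS.cells n, ∃ E₁ ∈ CS.cells (n + k), ∃ E₂ ∈ CS.cells (n + k),
    E₁ ⊆ E ∧ E₂ ⊆ E ∧ E₁ ≠ E₂ ∧ Disjoint E₁ E₂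

def NoBridgingCells (k : ℕ) : Prop :=
  ∀ n : ℕ, ∀ E₁ ∈ CS.cells n, ∀ E₂ ∈ CS.cells n, Disjoint E₁ E₂ →
    ∀ F ∈ CS.cells (n + k), ¬((E₁ ∩ F).Nonempty ∧ (E₂ ∩ F).Nonempty)

theorem univ_mem_cells : (univ : Set X) ∈ CS.cells 0 := by
  simp [CS.root]

theorem nonempty_of_mem_cells {n : ℕ} {E : Set X} (hE : E ∈ CS.cells n) : E.Nonempty :=
  (CS.isConnected_cells n E hE).nonempty

theorem exists_ancestor {m n : ℕ} (hmn : m ≤ n) {E : Set X} (hE : E ∈ CS.cells n) :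
    ∃ A ∈ CS.cells m, E ⊆ A := by
  induction n, hmn using Nat.le_induction generalizing E with
  | base => exact ⟨E, hE, subset_rfl⟩
  | succ n _ ih =>
    obtain ⟨P, hP, hEP⟩ := CS.exists_parent n E hE
    obtain ⟨A, hA, hPA⟩ := ih hP
    exact ⟨A, hA, hEP.trans hPA⟩

theorem exists_child_mem {n : ℕ} {E : Set X} (hE : E ∈ CS.cells n) {x : X} (hx : x ∈ E) :
    ∃ E' ∈ CS.cells (n + 1), x ∈ E' ∧ E' ⊆ E := by
  rw [CS.eq_sUnion_children n E hE] at hx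
  obtain ⟨E', ⟨hE', hE'E⟩, hxE'⟩ := hx
  exact ⟨E', hE', hxE', hE'E⟩

theorem exists_subcell_mem (j : ℕ) {n : ℕ} {E : Set X} (hE : E ∈ CS.cells n) {x : X}
    (hx : x ∈ E) : ∃ D ∈ CS.cells (n + j), x ∈ D ∧ D ⊆ E := by
  induction j with
  | zero => exact ⟨E, hE, hx, subset_rfl⟩
  | succ j ih =>
    obtain ⟨D, hD, hxD, hDE⟩ := ih
    obtain ⟨D', hD', hxD', hD'D⟩ := CS.exists_child_mem hD hxD
    exact ⟨D', hD', hxD', hD'D.trans hDE⟩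

theorem exists_antitone_cells_iInter_eq (x : X) :
    ∃ E : ℕ → Set X, (∀ n, E n ∈ CS.cells n) ∧ (∀ n, E (n + 1) ⊆ E n) ∧ ⋂ n, E n = {x} := by
  have hchild (n : ℕ) (E : Set X) : ∃ E' : Set X, E ∈ CS.cells n ∧ x ∈ E →
      E' ∈ CS.cells (n + 1) ∧ x ∈ E' ∧ E' ⊆ E := by
    by_cases h : E ∈ CS.cells n ∧ x ∈ E
    · obtain ⟨E', hE'⟩ := CS.exists_child_mem h.1 h.2
      exact ⟨E', fun _ => hE'⟩
    · exact ⟨∅, fun h' => absurd h' h⟩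
  choose child hchild using hchild
  let E : ℕ → Set X := fun n => Nat.rec univ child n
  have hE (n : ℕ) : E n ∈ CS.cells n ∧ x ∈ E n := by
    induction n with
    | zero => exact ⟨CS.univ_mem_cells, mem_univ x⟩
    | succ n ih => exact ⟨(hchild n _ ih).1, (hchild n _ ih).2.1⟩
  have hanti (n : ℕ) : E (n + 1) ⊆ E n := (hchild n _ (hE n)).2.2
  obtain ⟨y, hy⟩ := CS.descending_singleton E (fun n => (hE n).1) hanti
  have hxy : x ∈ ⋂ n, E n := mem_iInter.2 fun n => (hE n).2
  rw [hy, mem_singleton_iff] at hxy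
  exact ⟨E, fun n => (hE n).1, hanti, hxy ▸ hy⟩

theorem exists_disjoint_cells_mem [T2Space X] {p q : X} (hpq : p ≠ q) :
    ∃ n, ∃ E₁ ∈ CS.cells n, ∃ E₂ ∈ CS.cells n, Disjoint E₁ E₂ ∧ p ∈ E₁ ∧ q ∈ E₂ := by
  obtain ⟨E, hE, hEanti, hEp⟩ := CS.exists_antitone_cells_iInter_eq p
  obtain ⟨F, hF, hFanti, hFq⟩ := CS.exists_antitone_cells_iInter_eq q
  have hclosed (n : ℕ) : IsClosed (E n ∩ F n) :=
    (CS.isCompact_cells n _ (hE n)).isClosed.inter (CS.isCompact_cells n _ (hF n)).isClosed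
  have hempty : ⋂ n, E n ∩ F n = ∅ := by
    rwa [iInter_inter_distrib, hEp, hFq, singleton_inter_eq_empty, mem_singleton_iff]
  obtain ⟨n, hn⟩ : ∃ n, E n ∩ F n = ∅ := by
    by_contra! h
    have hcompact : IsCompact (E 0 ∩ F 0) :=
      (CS.isCompact_cells 0 _ (hE 0)).inter_right (CS.isCompact_cells 0 _ (hF 0)).isClosed
    exact (IsCompact.nonempty_iInter_of_sequence_nonempty_isCompact_isClosed _
      (fun n => inter_subset_inter (hEanti n) (hFanti n)) h hcompact hclosed).ne_empty hempty
  have hpE : p ∈ ⋂ n, E n := hEp ▸ mem_singleton p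
  have hqF : q ∈ ⋂ n, F n := hFq ▸ mem_singleton q
  exact ⟨n, E n, hE n, F n, hF n, disjoint_iff_inter_eq_empty.2 hn, mem_iInter.1 hpE n,
    mem_iInter.1 hqF n⟩

end CellStructure

section CellChain

variable {X : Type*} [TopologicalSpace X] {CS : CellStructure X}

theorem IsCellChain.mem {p q : X} {c : List (ℕ × Set X)} (hc : IsCellChain CS p q c)
    {e : ℕ × Set X} (he : e ∈ c) : e.2 ∈ CS.cells e.1 :=
  hc.2.1 e he

theorem isCellChain_singleton {n : ℕ} {E : Set X} (hE : E ∈ CS.cells n) {p q : X}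
    (hp : p ∈ E) (hq : q ∈ E) : IsCellChain CS p q [(n, E)] :=
  ⟨by simp, by simpa using hE, ⟨(n, E), rfl, hp⟩, ⟨(n, E), rfl, hq⟩, List.isChain_singleton _⟩

theorem IsCellChain.reverse {p q : X} {c : List (ℕ × Set X)} (hc : IsCellChain CS p q c) :
    IsCellChain CS q p c.reverse := by
  obtain ⟨hne, hmem, ⟨a, ha, hp⟩, ⟨b, hb, hq⟩, hchain⟩ := hc
  refine ⟨by simpa using hne, fun e he => hmem e (List.mem_reverse.1 he),
    ⟨b, by rwa [List.head?_reverse], hq⟩, ⟨a, by rwa [List.getLast?_reverse], hp⟩,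
    List.isChain_reverse.2 (hchain.imp fun _ _ h => ?_)⟩
  rwa [inter_comm]

theorem IsCellChain.append {p q z : X} {c₁ c₂ : List (ℕ × Set X)} (h₁ : IsCellChain CS p z c₁)
    (h₂ : IsCellChain CS z q c₂) : IsCellChain CS p q (c₁ ++ c₂) := by
  obtain ⟨hne₁, hmem₁, ⟨a, ha, hp⟩, ⟨a', ha', hz₁⟩, hchain₁⟩ := h₁
  obtain ⟨hne₂, hmem₂, ⟨b, hb, hz₂⟩, ⟨b', hb', hq⟩, hchain₂⟩ := h₂
  refine ⟨by simp [hne₁], fun e he => (List.mem_append.1 he).elim (hmem₁ e) (hmem₂ e),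
    ⟨a, by simp [List.head?_append, ha], hp⟩, ⟨b', by simp [List.getLast?_append, hb'], hq⟩,
    List.isChain_append.2 ⟨hchain₁, hchain₂, ?_⟩⟩
  rintro x hx y hy
  rw [ha', Option.mem_some_iff] at hx
  rw [hb, Option.mem_some_iff] at hy
  subst hx hy
  exact ⟨z, hz₁, hz₂⟩

theorem IsCellChain.exists_of_append {p q : X} {c₁ c₂ : List (ℕ × Set X)}
    (hc : IsCellChain CS p q (c₁ ++ c₂)) {a b : ℕ × Set X} (ha : c₁.getLast? = some a)
    (hb : c₂.head? = some b) :
    ∃ z ∈ a.2 ∩ b.2, IsCellChain CS p z c₁ ∧ IsCellChain CS z q c₂ := by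
  obtain ⟨-, hmem, ⟨e, he, hp⟩, ⟨e', he', hq⟩, hchain⟩ := hc
  obtain ⟨hchain₁, hchain₂, hab⟩ := List.isChain_append.1 hchain
  obtain ⟨z, hz⟩ := hab a ha b hb
  have hc₁ : c₁.head? = some e := by
    obtain _ | ⟨x, t⟩ := c₁
    · simp at ha
    · simpa using he
  have hc₂ : c₂.getLast? = some e' := by
    obtain _ | ⟨y, t⟩ := c₂
    · simp at hb
    · simpa [List.getLast?_append] using he'
  exact ⟨z, hz, ⟨by simp [← List.head?_eq_none_iff, hc₁], fun e he => hmem e (by simp [he]),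
      ⟨e, hc₁, hp⟩, ⟨a, ha, hz.1⟩, hchain₁⟩,
    ⟨by simp [← List.head?_eq_none_iff, hb], fun e he => hmem e (by simp [he]),
      ⟨b, hb, hz.2⟩, ⟨e', hc₂, hq⟩, hchain₂⟩⟩

theorem IsCellChain.exists_cut {k m : ℕ} (hsep : CS.NoBridgingCells k) {G₁ G₂ : Set X}
    (hG₁ : G₁ ∈ CS.cells m) (hG₂ : G₂ ∈ CS.cells m) (hG : Disjoint G₁ G₂) {p q : X}
    (hp : p ∈ G₁) (hq : q ∈ G₂) {c : List (ℕ × Set X)} (hc : IsCellChain CS p q c)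
    (hlevel : ∀ e ∈ c, m + k ≤ e.1) :
    ∃ c₁ c₂ z, c = c₁ ++ c₂ ∧ IsCellChain CS p z c₁ ∧ IsCellChain CS z q c₂ ∧
      (∃ A ∈ CS.cells (m + k), z ∈ A ∧ Disjoint G₁ A) ∧
      (∃ A ∈ CS.cells (m + k), z ∈ A ∧ Disjoint A G₂) := by
  choose! A hA hsubA using fun e he => CS.exists_ancestor (hlevel e he) (hc.mem he)
  obtain ⟨hne, -, ⟨a, ha, hpa⟩, ⟨b, hb, hqb⟩, -⟩ := id hc
  have hmissG₁ {e} (he : e ∈ c) (hmeet : (G₂ ∩ A e).Nonempty) : ¬(G₁ ∩ A e).Nonempty :=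
    fun h => hsep m G₁ hG₁ G₂ hG₂ hG (A e) (hA e he) ⟨h, hmeet⟩
  obtain ⟨c₁, c₂, e₁, e₂, rfl, he₁, he₂, hmiss, hmeet⟩ :=
    List.exists_eq_append_of_not_head_of_getLast (P := fun e => (G₂ ∩ A e).Nonempty) hne
      (fun e he hmeet => by
        rw [ha, Option.mem_some_iff] at he
        subst he
        have hac : a ∈ c := List.mem_of_mem_head? ha
        exact hmissG₁ hac hmeet ⟨p, hp, hsubA a hac hpa⟩)
      (fun e he => by
        rw [hb, Option.mem_some_iff] at he
        subst he
        exact ⟨q, hq, hsubA b (List.mem_of_mem_getLast? hb) hqb⟩)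
  have he₁c : e₁ ∈ c₁ ++ c₂ := List.mem_append_left _ (List.mem_of_mem_getLast? he₁)
  have he₂c : e₂ ∈ c₁ ++ c₂ := List.mem_append_right _ (List.mem_of_mem_head? he₂)
  obtain ⟨z, ⟨hz₁, hz₂⟩, hc₁, hc₂⟩ := hc.exists_of_append he₁ he₂
  refine ⟨c₁, c₂, z, rfl, hc₁, hc₂, ⟨A e₂, hA e₂ he₂c, hsubA e₂ he₂c hz₂, ?_⟩,
    ⟨A e₁, hA e₁ he₁c, hsubA e₁ he₁c hz₁, ?_⟩⟩
  · exact disjoint_iff_inter_eq_empty.2 (not_nonempty_iff_eq_empty.1 (hmissG₁ he₂c hmeet))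
  · exact (disjoint_iff_inter_eq_empty.2 (not_nonempty_iff_eq_empty.1 hmiss)).symm

variable {α : ℝ}

theorem pow_add_le_chainWeight_of_disjoint {k : ℕ} (hsep : CS.NoBridgingCells k) (hα : 1 ≤ α)
    (hαk : α ^ k ≤ 2) {c : List (ℕ × Set X)} {m : ℕ} {G₁ G₂ : Set X} (hG₁ : G₁ ∈ CS.cells m)
    (hG₂ : G₂ ∈ CS.cells m) (hG : Disjoint G₁ G₂) {p q : X} (hp : p ∈ G₁) (hq : q ∈ G₂)
    (hc : IsCellChain CS p q c) : α⁻¹ ^ (m + k) ≤ chainWeight α c := by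
  induction hlen : c.length using Nat.strong_induction_on
    generalizing c m G₁ G₂ p q with
  | _ L ih =>
  by_cases hlow : ∃ e ∈ c, e.1 ≤ m + k
  · obtain ⟨e, he, hle⟩ := hlow
    exact (pow_le_pow_of_le_one (by positivity) (inv_le_one_of_one_le₀ hα) hle).trans
      (pow_le_chainWeight (by linarith) he)
  push Not at hlow
  obtain ⟨c₁, c₂, z, rfl, hc₁, hc₂, ⟨A₁, hA₁, hzA₁, hG₁A₁⟩, ⟨A₂, hA₂, hzA₂, hA₂G₂⟩⟩ :=
    IsCellChain.exists_cut hsep hG₁ hG₂ hG hp hq hc fun e he => (hlow e he).le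
  obtain ⟨C, hC, hpC, hCG₁⟩ := CS.exists_subcell_mem k hG₁ hp
  obtain ⟨D, hD, hqD, hDG₂⟩ := CS.exists_subcell_mem k hG₂ hq
  have hpos₁ := List.length_pos_iff.2 hc₁.1
  have hpos₂ := List.length_pos_iff.2 hc₂.1
  rw [List.length_append] at hlen
  have hw₁ := ih c₁.length (by omega) hC hA₁ (hG₁A₁.mono_left hCG₁) hpC hzA₁ hc₁ rfl
  have hw₂ := ih c₂.length (by omega) hA₂ hD (hA₂G₂.mono_right hDG₂) hzA₂ hqD hc₂ rfl
  have hhalf : 1 ≤ 2 * α⁻¹ ^ k := by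
    rw [inv_pow, ← div_eq_mul_inv, one_le_div (by positivity)]
    exact hαk
  calc α⁻¹ ^ (m + k) ≤ α⁻¹ ^ (m + k) * (2 * α⁻¹ ^ k) :=
        le_mul_of_one_le_right (by positivity) hhalf
    _ = α⁻¹ ^ (m + k + k) + α⁻¹ ^ (m + k + k) := by ring
    _ ≤ chainWeight α c₁ + chainWeight α c₂ := add_le_add hw₁ hw₂
    _ = chainWeight α (c₁ ++ c₂) := (chainWeight_append α c₁ c₂).symm

theorem dAlpha_le_chainWeight (hα : 0 ≤ α) {p q : X} {c : List (ℕ × Set X)}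
    (hc : IsCellChain CS p q c) : dAlpha CS α p q ≤ chainWeight α c :=
  csInf_le ⟨0, by rintro _ ⟨c, -, rfl⟩; exact chainWeight_nonneg hα c⟩ ⟨c, hc, rfl⟩

theorem le_dAlpha {p q : X} {b : ℝ} (h : ∀ c, IsCellChain CS p q c → b ≤ chainWeight α c) :
    b ≤ dAlpha CS α p q :=
  le_csInf ⟨_, _, isCellChain_singleton CS.univ_mem_cells (mem_univ p) (mem_univ q), rfl⟩
    (by rintro _ ⟨c, hc, rfl⟩; exact h c hc)

theorem dAlpha_nonneg (hα : 0 ≤ α) (p q : X) : 0 ≤ dAlpha CS α p q :=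
  le_dAlpha fun c _ => chainWeight_nonneg hα c

theorem dAlpha_le_of_mem (hα : 0 ≤ α) {n : ℕ} {E : Set X} (hE : E ∈ CS.cells n) {p q : X}
    (hp : p ∈ E) (hq : q ∈ E) : dAlpha CS α p q ≤ α⁻¹ ^ n :=
  (dAlpha_le_chainWeight hα (isCellChain_singleton hE hp hq)).trans_eq
    (chainWeight_singleton α n E)

theorem dAlpha_comm (hα : 0 ≤ α) (p q : X) : dAlpha CS α p q = dAlpha CS α q p := by
  have key (p q : X) : dAlpha CS α p q ≤ dAlpha CS α q p := le_dAlpha fun c hc =>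
    (dAlpha_le_chainWeight hα hc.reverse).trans_eq (chainWeight_reverse α c)
  exact (key p q).antisymm (key q p)

theorem dAlpha_triangle (hα : 0 ≤ α) (x y z : X) :
    dAlpha CS α x z ≤ dAlpha CS α x y + dAlpha CS α y z := by
  have key : dAlpha CS α x z - dAlpha CS α x y ≤ dAlpha CS α y z := le_dAlpha fun c₂ hc₂ =>
    sub_le_comm.1 <| le_dAlpha fun c₁ hc₁ => by
      have := dAlpha_le_chainWeight hα (hc₁.append hc₂)
      rw [chainWeight_append] at this
      linarith
  linarith

theorem pow_add_le_dAlpha_of_disjoint {k : ℕ} (hsep : CS.NoBridgingCells k) (hα : 1 ≤ α)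
    (hαk : α ^ k ≤ 2) {m : ℕ} {G₁ G₂ : Set X} (hG₁ : G₁ ∈ CS.cells m) (hG₂ : G₂ ∈ CS.cells m)
    (hG : Disjoint G₁ G₂) {p q : X} (hp : p ∈ G₁) (hq : q ∈ G₂) :
    α⁻¹ ^ (m + k) ≤ dAlpha CS α p q :=
  le_dAlpha fun _ hc => pow_add_le_chainWeight_of_disjoint hsep hα hαk hG₁ hG₂ hG hp hq hc

theorem isMetricOn_dAlpha [T2Space X] {k : ℕ} (hsep : CS.NoBridgingCells k) (hα : 1 < α)
    (hαk : α ^ k ≤ 2) : IsMetricOn (dAlpha CS α) := by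
  have hα₀ : 0 ≤ α := by linarith
  refine ⟨dAlpha_nonneg hα₀, fun p q => ⟨fun h => ?_, ?_⟩, dAlpha_comm hα₀, dAlpha_triangle hα₀⟩
  · by_contra hpq
    obtain ⟨n, G₁, hG₁, G₂, hG₂, hG, hp, hq⟩ := CS.exists_disjoint_cells_mem hpq
    have := pow_add_le_dAlpha_of_disjoint hsep hα.le hαk hG₁ hG₂ hG hp hq
    rw [h] at this
    exact this.not_gt (by positivity)
  · rintro rfl
    refine le_antisymm (ge_of_tendsto' (tendsto_pow_atTop_nhds_zero_of_lt_one (by positivity)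
      (inv_lt_one_of_one_lt₀ hα)) fun n => ?_) (dAlpha_nonneg hα₀ p p)
    obtain ⟨E, hE, -, hEp⟩ := CS.exists_antitone_cells_iInter_eq p
    have hpE : p ∈ ⋂ n, E n := hEp ▸ mem_singleton p
    exact dAlpha_le_of_mem hα₀ (hE n) (mem_iInter.1 hpE n) (mem_iInter.1 hpE n)

theorem sdiam_dAlpha_le (hα : 0 ≤ α) {n : ℕ} {E : Set X} (hE : E ∈ CS.cells n) :
    sdiam (dAlpha CS α) E ≤ α⁻¹ ^ n :=
  Real.sSup_le (by rintro _ ⟨x, hx, y, hy, rfl⟩; exact dAlpha_le_of_mem hα hE hx hy)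
    (by positivity)

theorem pow_le_sdiam_dAlpha {k : ℕ} (hsub : CS.HasDisjointSubcells k)
    (hsep : CS.NoBridgingCells k) (hα : 1 ≤ α) (hαk : α ^ k ≤ 2) {n : ℕ} {E : Set X}
    (hE : E ∈ CS.cells n) : α⁻¹ ^ (n + 2 * k) ≤ sdiam (dAlpha CS α) E := by
  obtain ⟨E₁, hE₁, E₂, hE₂, hE₁E, hE₂E, -, hdisj⟩ := hsub n E hE
  obtain ⟨x, hx⟩ := CS.nonempty_of_mem_cells hE₁
  obtain ⟨y, hy⟩ := CS.nonempty_of_mem_cells hE₂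
  have hbdd : BddAbove (image2 (dAlpha CS α) E E) :=
    ⟨α⁻¹ ^ n, by rintro _ ⟨x, hx, y, hy, rfl⟩; exact dAlpha_le_of_mem (by linarith) hE hx hy⟩
  calc α⁻¹ ^ (n + 2 * k) = α⁻¹ ^ (n + k + k) := by ring
    _ ≤ dAlpha CS α x y := pow_add_le_dAlpha_of_disjoint hsep hα hαk hE₁ hE₂ hdisj hx hy
    _ ≤ sdiam (dAlpha CS α) E := le_csSup hbdd ⟨x, hE₁E hx, y, hE₂E hy, rfl⟩

theorem pow_add_le_sdist_dAlpha {k : ℕ} (hsep : CS.NoBridgingCells k) (hα : 1 ≤ α)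
    (hαk : α ^ k ≤ 2) {n : ℕ} {E₁ E₂ : Set X} (hE₁ : E₁ ∈ CS.cells n) (hE₂ : E₂ ∈ CS.cells n)
    (hdisj : Disjoint E₁ E₂) : α⁻¹ ^ (n + k) ≤ sdist (dAlpha CS α) E₁ E₂ := by
  obtain ⟨x, hx⟩ := CS.nonempty_of_mem_cells hE₁
  obtain ⟨y, hy⟩ := CS.nonempty_of_mem_cells hE₂
  exact le_csInf ⟨_, x, hx, y, hy, rfl⟩ (by
    rintro _ ⟨x, hx, y, hy, rfl⟩
    exact pow_add_le_dAlpha_of_disjoint hsep hα hαk hE₁ hE₂ hdisj hx hy)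

theorem isUndistortedWith_dAlpha {k : ℕ} (hsub : CS.HasDisjointSubcells k)
    (hsep : CS.NoBridgingCells k) (hα : 1 < α) (hαk : α ^ k ≤ 2) :
    IsUndistortedWith CS.cells (dAlpha CS α) α⁻¹ α⁻¹ (α⁻¹ ^ (2 * k))⁻¹ (α⁻¹ ^ k) := by
  have hα₀ : 0 ≤ α := by linarith
  have hinv₀ : 0 < α⁻¹ := by positivity
  have hinv₁ : α⁻¹ < 1 := inv_lt_one_of_one_lt₀ hα
  refine ⟨hinv₀, le_rfl, hinv₁, (one_le_inv₀ (by positivity)).2 (pow_le_one₀ hinv₀.le hinv₁.le),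
    by positivity, fun m n hmn E hE E' hE' _ => ?_, fun n E₁ hE₁ E₂ hE₂ hdisj => ?_⟩
  · exact div_bounds_of_pow_bounds hinv₀ hmn (pow_le_sdiam_dAlpha hsub hsep hα.le hαk hE)
      (sdiam_dAlpha_le hα₀ hE) (pow_le_sdiam_dAlpha hsub hsep hα.le hαk hE')
      (sdiam_dAlpha_le hα₀ hE')
  · calc α⁻¹ ^ k * sdiam (dAlpha CS α) E₁ ≤ α⁻¹ ^ k * α⁻¹ ^ n :=
          mul_le_mul_of_nonneg_left (sdiam_dAlpha_le hα₀ hE₁) (by positivity)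
      _ = α⁻¹ ^ (n + k) := by ring
      _ ≤ sdist (dAlpha CS α) E₁ E₂ := pow_add_le_sdist_dAlpha hsep hα.le hαk hE₁ hE₂ hdisj

end CellChain

theorem stmt7_general {X : Type*} [TopologicalSpace X]
    [TopologicalSpace.MetrizableSpace X] (CS : CellStructure X) (k : ℕ)
    (hk₁ : ∀ n : ℕ, ∀ E ∈ CS.cells n, ∃ E₁ ∈ CS.cells (n + k), ∃ E₂ ∈ CS.cells (n + k),
      E₁ ⊆ E ∧ E₂ ⊆ E ∧ E₁ ≠ E₂ ∧ Disjoint E₁ E₂)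
    (hk₂ : ∀ n : ℕ, ∀ E₁ ∈ CS.cells n, ∀ E₂ ∈ CS.cells n, Disjoint E₁ E₂ →
      ∀ F ∈ CS.cells (n + k), ¬((E₁ ∩ F).Nonempty ∧ (E₂ ∩ F).Nonempty))
    (α : ℝ) (hα₁ : 1 < α) (hα₂ : α ≤ (3 / 2 : ℝ) ^ ((k : ℝ))⁻¹) :
    IsMetricOn (dAlpha CS α) ∧ IsUndistorted CS.cells (dAlpha CS α) := by
  have hαk : α ^ k ≤ 2 := by
    rcases eq_or_ne k 0 with rfl | hk
    · norm_num
    · calc α ^ k ≤ ((3 / 2 : ℝ) ^ ((k : ℝ))⁻¹) ^ k := pow_le_pow_left₀ (by linarith) hα₂ k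
        _ = 3 / 2 := Real.rpow_inv_natCast_pow (by norm_num) hk
        _ ≤ 2 := by norm_num
  exact ⟨isMetricOn_dAlpha hk₂ hα₁ hαk, _, _, _, _, isUndistortedWith_dAlpha hk₁ hk₂ hα₁ hαk⟩

/-- If every `n`-cell contains two disjoint `(n+k)`-cells, no two
disjoint `n`-cells meet a common `(n+k)`-cell, and `1 < α ≤ (3/2)^{1/k}`, then `d_α`
is an undistorted metric on `X`. -/
theorem stmt7 {X : Type*} [TopologicalSpace X] [CompactSpace X] [ConnectedSpace X]
    [TopologicalSpace.MetrizableSpace X] (CS : CellStructure X) (k : ℕ)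
    (hk₁ : ∀ n : ℕ, ∀ E ∈ CS.cells n, ∃ E₁ ∈ CS.cells (n + k), ∃ E₂ ∈ CS.cells (n + k),
      E₁ ⊆ E ∧ E₂ ⊆ E ∧ E₁ ≠ E₂ ∧ Disjoint E₁ E₂)
    (hk₂ : ∀ n : ℕ, ∀ E₁ ∈ CS.cells n, ∀ E₂ ∈ CS.cells n, Disjoint E₁ E₂ →
      ∀ F ∈ CS.cells (n + k), ¬((E₁ ∩ F).Nonempty ∧ (E₂ ∩ F).Nonempty))
    (α : ℝ) (hα₁ : 1 < α) (hα₂ : α ≤ (3 / 2 : ℝ) ^ ((k : ℝ))⁻¹) :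
    IsMetricOn (dAlpha CS α) ∧ IsUndistorted CS.cells (dAlpha CS α) :=
  stmt7_general CS k hk₁ hk₂ α hα₁ hα₂
end
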